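/- arXiv:1108.1456 — 8 statements merged into one kernel-verified Lean document; each statement's English description precedes it below -/
import Mathlib

section
/- For the utility u(x) = α·log₂(1 + (1-x)·P·c / (n₀α + I)) + β·log₂(1 + x·P·c / (n₀β)) with positive parameters α, β, P, c, n₀ and I ≥ 0, the unique maximizer of u over x ∈ [0,1] equals min{x₀, 1}, where x₀ is the unique solution in ℝ of α·P·c/(n₀α + I + (1-x)·P·c) = β·P·c/(n₀β + x·P·c) (i.e., of u'(x) = 0), and x₀ > 0. -/
open Real Set

private lemma solve_eq (α β P c n₀ I : ℝ) (hα : 0 < α) (hβ : 0 < β) (hP : 0 < P)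
    (hc : 0 < c) (hn : 0 < n₀) (hI : 0 ≤ I) (y : ℝ)
    (hy : α * (P * c) / (n₀ * α + I + (1 - y) * (P * c))
        = β * (P * c) / (n₀ * β + y * (P * c))) :
    y = β * (I + P * c) / ((α + β) * (P * c)) := by
  have htpos : 0 < P * c := by positivity
  have hD1 : n₀ * α + I + (1 - y) * (P * c) ≠ 0 := by
    intro h0
    rw [h0, div_zero] at hy
    rcases div_eq_zero_iff.mp hy.symm with h | h
    · nlinarith
    · nlinarith
  have hD2 : n₀ * β + y * (P * c) ≠ 0 := by
    intro h0
    rw [h0, div_zero] at hy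
    rcases div_eq_zero_iff.mp hy with h | h
    · nlinarith
    · nlinarith
  rw [div_eq_div_iff hD1 hD2] at hy
  have key2 : (y * ((α + β) * (P * c))) * (P * c) = (β * (I + P * c)) * (P * c) := by
    linear_combination hy
  have key := mul_right_cancel₀ (ne_of_gt htpos) key2
  rw [eq_div_iff (by positivity)]
  exact key


set_option maxHeartbeats 1000000 in
theorem stmt_1 (α β P c n₀ I : ℝ) (hα : 0 < α) (hβ : 0 < β) (hP : 0 < P)
    (hc : 0 < c) (hn : 0 < n₀) (hI : 0 ≤ I) :
    (∃! x₀ : ℝ,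
      α * (P * c) / (n₀ * α + I + (1 - x₀) * (P * c))
        = β * (P * c) / (n₀ * β + x₀ * (P * c))) ∧
    ∀ x₀ : ℝ,
      α * (P * c) / (n₀ * α + I + (1 - x₀) * (P * c))
        = β * (P * c) / (n₀ * β + x₀ * (P * c)) →
      0 < x₀ ∧ min x₀ 1 ∈ Icc (0:ℝ) 1 ∧
      ∀ x ∈ Icc (0:ℝ) 1, x ≠ min x₀ 1 →
        α * Real.logb 2 (1 + (1 - x) * P * c / (n₀ * α + I)) +
          β * Real.logb 2 (1 + x * P * c / (n₀ * β)) <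
        α * Real.logb 2 (1 + (1 - min x₀ 1) * P * c / (n₀ * α + I)) +
          β * Real.logb 2 (1 + min x₀ 1 * P * c / (n₀ * β)) := by
  have htpos : 0 < P * c := by positivity
  set t := P * c with htdef
  set z₀ := β * (I + t) / ((α + β) * t) with hz0def
  have hz0pos : 0 < z₀ := by rw [hz0def]; positivity
  have hD2w : 0 < n₀ * β + z₀ * t := by positivity
  have hD1w : 0 < n₀ * α + I + (1 - z₀) * t := by
    have h : n₀ * α + I + (1 - z₀) * t = n₀ * α + α * (I + t) / (α + β) := by
      rw [hz0def]; field_simp; ring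
    rw [h]; positivity
  have heq : α * t / (n₀ * α + I + (1 - z₀) * t) = β * t / (n₀ * β + z₀ * t) := by
    rw [div_eq_div_iff (ne_of_gt hD1w) (ne_of_gt hD2w), hz0def]
    field_simp
    ring
  constructor
  · exact ⟨z₀, heq, fun y hy => solve_eq α β P c n₀ I hα hβ hP hc hn hI y hy⟩
  · intro x₀ hx₀
    have hx0z : x₀ = z₀ := solve_eq α β P c n₀ I hα hβ hP hc hn hI x₀ hx₀
    subst hx0z
    refine ⟨hz0pos, ⟨le_min hz0pos.le zero_le_one, min_le_right _ _⟩, ?_⟩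
    intro x hx hne
    set m := min z₀ 1 with hmdef
    have hm0 : 0 < m := lt_min hz0pos one_pos
    have hm1 : m ≤ 1 := min_le_right _ _
    obtain ⟨hx0, hx1⟩ := hx
    have hK1 : 0 < n₀ * α + I := by positivity
    have hK2 : 0 < n₀ * β := by positivity
    have hX : 0 < n₀ * α + I + (1 - x) * t := by nlinarith
    have hY : 0 < n₀ * β + x * t := by nlinarith
    have hX' : 0 < n₀ * α + I + (1 - m) * t := by nlinarith
    have hY' : 0 < n₀ * β + m * t := by nlinarith
    have hmz : z₀ ≤ 1 → m = z₀ := fun hle => min_eq_left hle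
    have hm1' : 1 ≤ z₀ → m = 1 := fun hle => min_eq_right hle
    clear_value z₀ m
    -- rewrite the logb arguments as quotients
    have e1 : ∀ z : ℝ, 1 + (1 - z) * P * c / (n₀ * α + I)
        = (n₀ * α + I + (1 - z) * t) / (n₀ * α + I) := by
      intro z; rw [htdef]; field_simp
    have e2 : ∀ z : ℝ, 1 + z * P * c / (n₀ * β)
        = (n₀ * β + z * t) / (n₀ * β) := by
      intro z; rw [htdef]; field_simp
    rw [e1 x, e2 x, e1 m, e2 m,
        Real.logb_div (ne_of_gt hX) (ne_of_gt hK1),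
        Real.logb_div (ne_of_gt hY) (ne_of_gt hK2),
        Real.logb_div (ne_of_gt hX') (ne_of_gt hK1),
        Real.logb_div (ne_of_gt hY') (ne_of_gt hK2)]
    have hmain : α * Real.logb 2 (n₀ * α + I + (1 - x) * t) +
        β * Real.logb 2 (n₀ * β + x * t) <
        α * Real.logb 2 (n₀ * α + I + (1 - m) * t) +
        β * Real.logb 2 (n₀ * β + m * t) := by
      have hL : (0:ℝ) < Real.log 2 := Real.log_pos (by norm_num)
      simp only [Real.logb]
      rw [mul_div_assoc', mul_div_assoc', mul_div_assoc', mul_div_assoc',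
          ← add_div, ← add_div]
      gcongr ?_ / _
      -- natural log inequality
      have hXne : (n₀ * α + I + (1 - x) * t) / (n₀ * α + I + (1 - m) * t) ≠ 1 := by
        intro h
        rw [div_eq_one_iff_eq (ne_of_gt hX')] at h
        apply hne
        have : (1 - x) * t = (1 - m) * t := by linarith
        have := mul_right_cancel₀ (ne_of_gt htpos) this
        linarith
      have hYne : (n₀ * β + x * t) / (n₀ * β + m * t) ≠ 1 := by
        intro h
        rw [div_eq_one_iff_eq (ne_of_gt hY')] at h
        apply hne
        have : x * t = m * t := by linarith
        exact mul_right_cancel₀ (ne_of_gt htpos) this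
      have h1 := Real.log_lt_sub_one_of_pos (by positivity) hXne
      have h2 := Real.log_lt_sub_one_of_pos (by positivity) hYne
      rw [Real.log_div (ne_of_gt hX) (ne_of_gt hX')] at h1
      rw [Real.log_div (ne_of_gt hY) (ne_of_gt hY')] at h2
      have hbound : α * ((n₀ * α + I + (1 - x) * t) / (n₀ * α + I + (1 - m) * t) - 1)
          + β * ((n₀ * β + x * t) / (n₀ * β + m * t) - 1) ≤ 0 := by
        rcases le_or_gt z₀ 1 with hle | hlt
        · have hm : m = z₀ := hmz hle
          have hrw : α * ((n₀ * α + I + (1 - x) * t) / (n₀ * α + I + (1 - m) * t) - 1)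
              + β * ((n₀ * β + x * t) / (n₀ * β + m * t) - 1)
              = (m - x) * (α * t / (n₀ * α + I + (1 - m) * t)
                  - β * t / (n₀ * β + m * t)) := by
            obtain ⟨A, hA⟩ : ∃ A, A = n₀ * α + I + (1 - m) * t := ⟨_, rfl⟩
            obtain ⟨B, hB⟩ : ∃ B, B = n₀ * β + m * t := ⟨_, rfl⟩
            have hAne : A ≠ 0 := by rw [hA]; exact ne_of_gt hX'
            have hBne : B ≠ 0 := by rw [hB]; exact ne_of_gt hY'
            have hx' : n₀ * α + I + (1 - x) * t = A + (m - x) * t := by rw [hA]; ring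
            have hy' : n₀ * β + x * t = B - (m - x) * t := by rw [hB]; ring
            rw [hx', hy', ← hA, ← hB]
            field_simp
            ring
          rw [hrw, hm, heq, sub_self, mul_zero]
        · have hm : m = 1 := hm1' hlt.le
          have hβI : α * t < β * I := by
            rw [hz0def, lt_div_iff₀ (by positivity)] at hlt
            nlinarith
          have hrw : α * ((n₀ * α + I + (1 - x) * t) / (n₀ * α + I + (1 - m) * t) - 1)
              + β * ((n₀ * β + x * t) / (n₀ * β + m * t) - 1)
              = (x - m) * (β * t / (n₀ * β + m * t)
                  - α * t / (n₀ * α + I + (1 - m) * t)) := by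
            obtain ⟨A, hA⟩ : ∃ A, A = n₀ * α + I + (1 - m) * t := ⟨_, rfl⟩
            obtain ⟨B, hB⟩ : ∃ B, B = n₀ * β + m * t := ⟨_, rfl⟩
            have hAne : A ≠ 0 := by rw [hA]; exact ne_of_gt hX'
            have hBne : B ≠ 0 := by rw [hB]; exact ne_of_gt hY'
            have hx' : n₀ * α + I + (1 - x) * t = A + (m - x) * t := by rw [hA]; ring
            have hy' : n₀ * β + x * t = B - (m - x) * t := by rw [hB]; ring
            rw [hx', hy', ← hA, ← hB]
            field_simp
            ring
          rw [hrw, hm]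
          apply mul_nonpos_of_nonpos_of_nonneg
          · have : x < 1 := lt_of_le_of_ne hx1 (by rw [hm] at hne; exact hne)
            linarith
          · rw [sub_nonneg, div_le_div_iff₀ (by nlinarith) (by nlinarith)]
            nlinarith
      have hs1 := mul_lt_mul_of_pos_left h1 hα
      have hs2 := mul_lt_mul_of_pos_left h2 hβ
      linarith
    linarith
end

section
/- In a two-player COG with linear best-response segments x₁ = f₁(x₂) = a₁ − b₁x₂ and x₂ = f₂(x₁) = a₂ − b₂x₁, where a₁ = (β₁/(α+β₁))(1 + P₂c₂₁/(P₁c₁₁)), b₁ = (β₁/(α+β₁))·P₂c₂₁/(P₁c₁₁), and analogously for player 2, if (c₁₂/c₂₂) < (P₂/P₁)·(α+β₁)/β₂ and (c₂₁/c₁₁) < (P₁/P₂)·(α+β₂)/β₁, then b₁·b₂ < 1 and the system x₁ = f₁(x₂), x₂ = f₂(x₁) has a unique solution, which lies in (0,1)². -/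
/-!
Write each best response as `xᵢ = rᵢ + bᵢ (1 - xⱼ)`, where `rᵢ = βᵢ/(α+βᵢ) ∈ (0,1)` is the response
to a fully loaded opponent. The interference conditions say exactly `f₁ (f₂ 1) < 1` and
`f₂ (f₁ 1) < 1`, and they force `b₁ b₂ < 1`. At an intersection `x`,
`(1 - b₁ b₂)(x₁ - 1) = f₁ (f₂ 1) - 1 < 0`, so `x₁ < 1`, and then `x₂ = r₂ + b₂ (1 - x₁) ≥ r₂ > 0`.
For the clipped responses, a player capped at `1` would be answered by `rⱼ < 1`, whose own
response is again below `1`: so neither cap is active and a fixed point lies on both lines.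
-/

open Set

def IsLineIntersection (r₁ b₁ r₂ b₂ : ℝ) (p : ℝ × ℝ) : Prop :=
  p.1 = r₁ + b₁ * (1 - p.2) ∧ p.2 = r₂ + b₂ * (1 - p.1)

structure WeakInterference (r₁ b₁ r₂ b₂ : ℝ) : Prop where
  pos_left : 0 < r₁
  pos_right : 0 < r₂
  lt_one_left : r₁ < 1
  lt_one_right : r₂ < 1
  nonneg_left : 0 ≤ b₁
  nonneg_right : 0 ≤ b₂
  response_lt_one_left : r₁ + b₁ * (1 - r₂) < 1
  response_lt_one_right : r₂ + b₂ * (1 - r₁) < 1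

section LineIntersection

variable {r₁ b₁ r₂ b₂ : ℝ}

namespace IsLineIntersection

variable {p : ℝ × ℝ}

theorem swap (h : IsLineIntersection r₁ b₁ r₂ b₂ p) : IsLineIntersection r₂ b₂ r₁ b₁ p.swap :=
  ⟨h.2, h.1⟩

theorem one_sub_mul_mul_fst_sub_one (h : IsLineIntersection r₁ b₁ r₂ b₂ p) :
    (1 - b₁ * b₂) * (p.1 - 1) = r₁ + b₁ * (1 - r₂) - 1 := by
  linear_combination h.1 - b₁ * h.2

theorem fst_lt_one (h : IsLineIntersection r₁ b₁ r₂ b₂ p) (hb : b₁ * b₂ < 1)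
    (hr : r₁ + b₁ * (1 - r₂) < 1) : p.1 < 1 := by
  have hneg : (1 - b₁ * b₂) * (p.1 - 1) < 0 := by
    rw [h.one_sub_mul_mul_fst_sub_one]
    linarith
  linarith [neg_of_mul_neg_right hneg (by linarith)]

theorem fst_pos (h : IsLineIntersection r₁ b₁ r₂ b₂ p) (hr₁ : 0 < r₁) (hb₁ : 0 ≤ b₁)
    (hp₂ : p.2 ≤ 1) : 0 < p.1 := by
  have := mul_nonneg hb₁ (sub_nonneg.2 hp₂)
  rw [h.1]
  linarith

theorem fst_eq (h : IsLineIntersection r₁ b₁ r₂ b₂ p) (hD : 1 - b₁ * b₂ ≠ 0) :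
    p.1 = 1 + (r₁ + b₁ * (1 - r₂) - 1) / (1 - b₁ * b₂) := by
  rw [← h.one_sub_mul_mul_fst_sub_one, mul_div_cancel_left₀ _ hD]
  ring

end IsLineIntersection

theorem existsUnique_isLineIntersection (hb : b₁ * b₂ ≠ 1) :
    ∃! p, IsLineIntersection r₁ b₁ r₂ b₂ p := by
  have hD : 1 - b₁ * b₂ ≠ 0 := sub_ne_zero.2 (Ne.symm hb)
  have hD' : 1 - b₂ * b₁ ≠ 0 := by rwa [mul_comm]
  refine ⟨(1 + (r₁ + b₁ * (1 - r₂) - 1) / (1 - b₁ * b₂),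
    1 + (r₂ + b₂ * (1 - r₁) - 1) / (1 - b₂ * b₁)), ⟨?_, ?_⟩, fun q hq => ?_⟩
  · field_simp
    ring
  · field_simp
    ring
  · ext
    · exact hq.fst_eq hD
    · exact hq.swap.fst_eq hD'

theorem response_le_one_of_eq_min {x y : ℝ} (hx : x = min (r₁ + b₁ * (1 - y)) 1)
    (hy : y = min (r₂ + b₂ * (1 - x)) 1) (hr₂ : r₂ < 1) (h₁ : r₁ + b₁ * (1 - r₂) < 1) :
    r₁ + b₁ * (1 - y) ≤ 1 := by
  by_contra! H
  have hx₁ : x = 1 := by rw [hx, min_eq_right H.le]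
  have hyr : y = r₂ := by rw [hy, hx₁, sub_self, mul_zero, add_zero, min_eq_left hr₂.le]
  rw [hyr] at H
  exact H.not_gt h₁

namespace WeakInterference

variable (hw : WeakInterference r₁ b₁ r₂ b₂)
include hw

theorem symm : WeakInterference r₂ b₂ r₁ b₁ :=
  ⟨hw.pos_right, hw.pos_left, hw.lt_one_right, hw.lt_one_left, hw.nonneg_right, hw.nonneg_left,
    hw.response_lt_one_right, hw.response_lt_one_left⟩

theorem mul_lt_one : b₁ * b₂ < 1 := by
  have hr₁ : 0 < 1 - r₁ := sub_pos.2 hw.lt_one_left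
  have hr₂ : 0 < 1 - r₂ := sub_pos.2 hw.lt_one_right
  have h₁ : b₁ * (1 - r₂) < 1 - r₁ := by linarith [hw.response_lt_one_left]
  have h₂ : b₂ * (1 - r₁) < 1 - r₂ := by linarith [hw.response_lt_one_right]
  have h := mul_lt_mul'' h₁ h₂ (mul_nonneg hw.nonneg_left hr₂.le)
    (mul_nonneg hw.nonneg_right hr₁.le)
  refine lt_of_mul_lt_mul_right (a := (1 - r₁) * (1 - r₂)) ?_ (mul_pos hr₁ hr₂).le
  linarith

theorem mem_Ioo_of_isLineIntersection {p : ℝ × ℝ} (hp : IsLineIntersection r₁ b₁ r₂ b₂ p) :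
    p.1 ∈ Ioo 0 1 ∧ p.2 ∈ Ioo 0 1 := by
  have hp₁ : p.1 < 1 := hp.fst_lt_one hw.mul_lt_one hw.response_lt_one_left
  have hp₂ : p.2 < 1 :=
    hp.swap.fst_lt_one hw.symm.mul_lt_one hw.response_lt_one_right
  exact ⟨⟨hp.fst_pos hw.pos_left hw.nonneg_left hp₂.le, hp₁⟩,
    ⟨hp.swap.fst_pos hw.pos_right hw.nonneg_right hp₁.le, hp₂⟩⟩

theorem isLineIntersection_of_eq_min {q : ℝ × ℝ} (hq₁ : q.1 = min (r₁ + b₁ * (1 - q.2)) 1)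
    (hq₂ : q.2 = min (r₂ + b₂ * (1 - q.1)) 1) : IsLineIntersection r₁ b₁ r₂ b₂ q := by
  have h₁ := response_le_one_of_eq_min hq₁ hq₂ hw.lt_one_right hw.response_lt_one_left
  have h₂ := response_le_one_of_eq_min hq₂ hq₁ hw.lt_one_left hw.response_lt_one_right
  rw [min_eq_left h₁] at hq₁
  rw [min_eq_left h₂] at hq₂
  exact ⟨hq₁, hq₂⟩

end WeakInterference

end LineIntersection

theorem mul_div_mul_lt_of_div_lt {P Q c c' β A : ℝ} (hP : 0 < P) (hQ : 0 < Q) (hβ : 0 < β)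
    (h : c / c' < P / Q * (A / β)) : β * (Q * c / (P * c')) < A :=
  calc β * (Q * c / (P * c')) = β * (Q / P) * (c / c') := by rw [mul_div_mul_comm]; ring
    _ < β * (Q / P) * (P / Q * (A / β)) := mul_lt_mul_of_pos_left h (by positivity)
    _ = A := by field_simp

section InterferenceConditions

variable {α β₁ β₂ k₁ k₂ : ℝ}

theorem div_add_div_mul_one_sub_div_lt_one (hα : 0 < α) (hβ₁ : 0 < β₁) (hβ₂ : 0 < β₂)
    (hk : β₁ * k₁ < α + β₂) :
    β₁ / (α + β₁) + β₁ / (α + β₁) * k₁ * (1 - β₂ / (α + β₂)) < 1 := by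
  rw [← sub_pos]
  have : 1 - (β₁ / (α + β₁) + β₁ / (α + β₁) * k₁ * (1 - β₂ / (α + β₂)))
      = α * (α + β₂ - β₁ * k₁) / ((α + β₁) * (α + β₂)) := by
    field_simp
    ring
  rw [this]
  exact div_pos (mul_pos hα (sub_pos.2 hk)) (by positivity)

theorem weakInterference_of_mul_lt_add (hα : 0 < α) (hβ₁ : 0 < β₁) (hβ₂ : 0 < β₂)
    (hk₁ : 0 ≤ k₁) (hk₂ : 0 ≤ k₂) (h₁ : β₁ * k₁ < α + β₂) (h₂ : β₂ * k₂ < α + β₁) :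
    WeakInterference (β₁ / (α + β₁)) (β₁ / (α + β₁) * k₁) (β₂ / (α + β₂))
      (β₂ / (α + β₂) * k₂) where
  pos_left := by positivity
  pos_right := by positivity
  lt_one_left := (div_lt_one (by positivity)).2 (by linarith)
  lt_one_right := (div_lt_one (by positivity)).2 (by linarith)
  nonneg_left := by positivity
  nonneg_right := by positivity
  response_lt_one_left := div_add_div_mul_one_sub_div_lt_one hα hβ₁ hβ₂ h₁
  response_lt_one_right := div_add_div_mul_one_sub_div_lt_one hα hβ₂ hβ₁ h₂

end InterferenceConditions

theorem stmt_5 (α β₁ β₂ P₁ P₂ c₁₁ c₂₂ c₁₂ c₂₁ : ℝ)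
    (hα : 0 < α) (hβ₁ : 0 < β₁) (hβ₂ : 0 < β₂) (hP₁ : 0 < P₁) (hP₂ : 0 < P₂)
    (hc₁₁ : 0 < c₁₁) (hc₂₂ : 0 < c₂₂) (hc₁₂ : 0 < c₁₂) (hc₂₁ : 0 < c₂₁)
    (h1 : c₁₂ / c₂₂ < P₂ / P₁ * ((α + β₁) / β₂))
    (h2 : c₂₁ / c₁₁ < P₁ / P₂ * ((α + β₂) / β₁)) :
    let b₁ := β₁ / (α + β₁) * (P₂ * c₂₁ / (P₁ * c₁₁))
    let b₂ := β₂ / (α + β₂) * (P₁ * c₁₂ / (P₂ * c₂₂))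
    let f₁ := fun x₂ : ℝ => β₁ / (α + β₁) * (1 + P₂ * c₂₁ / (P₁ * c₁₁) * (1 - x₂))
    let f₂ := fun x₁ : ℝ => β₂ / (α + β₂) * (1 + P₁ * c₁₂ / (P₂ * c₂₂) * (1 - x₁))
    let BR₁ := fun x₂ : ℝ => min (f₁ x₂) 1
    let BR₂ := fun x₁ : ℝ => min (f₂ x₁) 1
    b₁ * b₂ < 1 ∧
    (∃! p : ℝ × ℝ, p.1 = f₁ p.2 ∧ p.2 = f₂ p.1) ∧
    ∀ p : ℝ × ℝ, (p.1 = f₁ p.2 ∧ p.2 = f₂ p.1) →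
      p.1 ∈ Ioo (0:ℝ) 1 ∧ p.2 ∈ Ioo (0:ℝ) 1 ∧
      ∀ q : ℝ × ℝ, q.1 ∈ Icc (0:ℝ) 1 → q.2 ∈ Icc (0:ℝ) 1 →
        q.1 = BR₁ q.2 → q.2 = BR₂ q.1 → q = p := by
  intro b₁ b₂ f₁ f₂ BR₁ BR₂
  have hw : WeakInterference (β₁ / (α + β₁)) b₁ (β₂ / (α + β₂)) b₂ :=
    weakInterference_of_mul_lt_add hα hβ₁ hβ₂ (by positivity) (by positivity)
      (mul_div_mul_lt_of_div_lt hP₁ hP₂ hβ₁ h2) (mul_div_mul_lt_of_div_lt hP₂ hP₁ hβ₂ h1)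
  have hf₁ : ∀ x, f₁ x = β₁ / (α + β₁) + b₁ * (1 - x) := fun x => by simp only [f₁, b₁]; ring
  have hf₂ : ∀ x, f₂ x = β₂ / (α + β₂) + b₂ * (1 - x) := fun x => by simp only [f₂, b₂]; ring
  have hsys : ∀ p : ℝ × ℝ, (p.1 = f₁ p.2 ∧ p.2 = f₂ p.1) ↔
      IsLineIntersection (β₁ / (α + β₁)) b₁ (β₂ / (α + β₂)) b₂ p := by
    intro p
    rw [hf₁, hf₂, IsLineIntersection]
  simp only [hsys]
  refine ⟨hw.mul_lt_one, existsUnique_isLineIntersection hw.mul_lt_one.ne, fun p hp => ?_⟩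
  obtain ⟨hp₁, hp₂⟩ := hw.mem_Ioo_of_isLineIntersection hp
  refine ⟨hp₁, hp₂, fun q _ _ hq₁ hq₂ => ?_⟩
  refine (existsUnique_isLineIntersection hw.mul_lt_one.ne).unique
    (hw.isLineIntersection_of_eq_min ?_ ?_) hp
  · rw [hq₁, ← hf₁]
  · rw [hq₂, ← hf₂]
end

section
/- In a two-player COG, if (c₁₂/c₂₂) ≥ (P₂/P₁)·(α+β₁)/β₂ and (c₂₁/c₁₁) < (P₁/P₂)·(α+β₂)/β₁, then the point (x₁, x₂) = (β₁/(α+β₁), 1) is the unique simultaneous fixed point of the best-response maps BR₁(x₂) = min{a₁ − b₁x₂, 1} and BR₂(x₁) = min{a₂ − b₂x₁, 1} over [0,1]². -/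
open Set

/-!
Write both best responses as `min (r + s * (1 - y)) 1` with `r = β/(α+β)`; after clearing
denominators the two hypotheses read `1 - r₂ ≤ s₂ (1 - r₁)` and `s₁ (1 - r₂) < 1 - r₁`. The first
says that player 2's response to `r₁` is capped at `1`, so `(r₁, 1)` is a fixed point. At a fixed
point with `x₂ < 1`, put `u = 1 - x₁ ≥ 0` and `v = 1 - x₂ > 0`: the best-response relations read
`(1 - r₂) - v = s₂ u` and `(1 - r₁) - u ≤ s₁ v`, and weighting them by `1 - r₁` and `1 - r₂` the
hypotheses give `(1 - r₁)(1 - r₂) ≥ (1 - r₁) v + (1 - r₂) u > (1 - r₁)(1 - r₂)`.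
-/

def cappedResponse (r s y : ℝ) : ℝ := min (r + s * (1 - y)) 1

lemma cappedResponse_one {r : ℝ} (hr : r ≤ 1) (s : ℝ) : cappedResponse r s 1 = r := by
  simp [cappedResponse, hr]

lemma cappedResponse_eq_one {r s y : ℝ} (h : 1 ≤ r + s * (1 - y)) :
    cappedResponse r s y = 1 :=
  min_eq_right h

lemma eq_one_of_cappedResponse_fixed {r₁ r₂ s₁ s₂ x₁ x₂ : ℝ} (hr₂ : r₂ ≤ 1)
    (h₁ : 1 - r₂ ≤ s₂ * (1 - r₁)) (h₂ : s₁ * (1 - r₂) < 1 - r₁) (hx₁ : x₁ ≤ 1)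
    (hfix₁ : x₁ = cappedResponse r₁ s₁ x₂) (hfix₂ : x₂ = cappedResponse r₂ s₂ x₁) :
    x₂ = 1 := by
  by_contra hne
  have hx₂ : x₂ < 1 := lt_of_le_of_ne (hfix₂ ▸ min_le_right _ _) hne
  have hresp₂ : x₂ = r₂ + s₂ * (1 - x₁) := by
    have hlt : cappedResponse r₂ s₂ x₁ < 1 := hfix₂ ▸ hx₂
    rw [hfix₂, cappedResponse, min_eq_left (min_lt_iff.1 hlt |>.resolve_right (lt_irrefl 1)).le]
  have hresp₁ : x₁ ≤ r₁ + s₁ * (1 - x₂) := hfix₁ ▸ min_le_left _ _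
  linarith [mul_le_mul_of_nonneg_left h₁ (sub_nonneg.2 hx₁),
    mul_lt_mul_of_pos_left h₂ (sub_pos.2 hx₂),
    mul_le_mul_of_nonneg_left hresp₁ (sub_nonneg.2 hr₂), congrArg (· * (1 - r₁)) hresp₂]

theorem cappedResponse_fixed_iff {r₁ r₂ s₁ s₂ x₁ x₂ : ℝ} (hr₁ : r₁ ≤ 1) (hr₂ : r₂ ≤ 1)
    (h₁ : 1 - r₂ ≤ s₂ * (1 - r₁)) (h₂ : s₁ * (1 - r₂) < 1 - r₁) (hx₁ : x₁ ≤ 1) :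
    (x₁ = cappedResponse r₁ s₁ x₂ ∧ x₂ = cappedResponse r₂ s₂ x₁) ↔ (x₁ = r₁ ∧ x₂ = 1) := by
  constructor
  · rintro ⟨hfix₁, hfix₂⟩
    have hx₂ := eq_one_of_cappedResponse_fixed hr₂ h₁ h₂ hx₁ hfix₁ hfix₂
    subst hx₂
    exact ⟨hfix₁.trans (cappedResponse_one hr₁ s₁), rfl⟩
  · rintro ⟨rfl, rfl⟩
    exact ⟨(cappedResponse_one hr₁ s₁).symm,
      (cappedResponse_eq_one (by linarith)).symm⟩

lemma one_sub_div_add_self {α β : ℝ} (h : α + β ≠ 0) : 1 - β / (α + β) = α / (α + β) := by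
  field_simp
  ring

theorem stmt_6_general (α β₁ β₂ P₁ P₂ c₁₁ c₂₂ c₁₂ c₂₁ : ℝ)
    (hα : 0 < α) (hβ₁ : 0 < β₁) (hβ₂ : 0 < β₂) (hP₁ : 0 < P₁) (hP₂ : 0 < P₂)
    (h1 : P₂ / P₁ * ((α + β₁) / β₂) ≤ c₁₂ / c₂₂)
    (h2 : c₂₁ / c₁₁ < P₁ / P₂ * ((α + β₂) / β₁)) :
    let BR₁ := fun x₂ : ℝ =>
      min (β₁ / (α + β₁) * (1 + P₂ * c₂₁ / (P₁ * c₁₁) * (1 - x₂))) 1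
    let BR₂ := fun x₁ : ℝ =>
      min (β₂ / (α + β₂) * (1 + P₁ * c₁₂ / (P₂ * c₂₂) * (1 - x₁))) 1
    ∀ x₁ x₂ : ℝ, x₁ ∈ Icc (0:ℝ) 1 → x₂ ∈ Icc (0:ℝ) 1 →
      ((x₁ = BR₁ x₂ ∧ x₂ = BR₂ x₁) ↔ (x₁ = β₁ / (α + β₁) ∧ x₂ = 1)) := by
  intro BR₁ BR₂ x₁ x₂ hx₁ _
  set r₁ := β₁ / (α + β₁)
  set r₂ := β₂ / (α + β₂)
  set t₁ := P₂ * c₂₁ / (P₁ * c₁₁)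
  set t₂ := P₁ * c₁₂ / (P₂ * c₂₂)
  have hBR (r t y : ℝ) : min (r * (1 + t * (1 - y))) 1 = cappedResponse r (r * t) y := by
    rw [cappedResponse, mul_one_add, mul_assoc]
  have hr (β : ℝ) (hβ : 0 < β) : β / (α + β) ≤ 1 := (div_le_one (by positivity)).2 (by linarith)
  have hgap₁ : 1 - r₁ = α / (α + β₁) := one_sub_div_add_self (by positivity)
  have hgap₂ : 1 - r₂ = α / (α + β₂) := one_sub_div_add_self (by positivity)
  have h₁ : 1 - r₂ ≤ r₂ * t₂ * (1 - r₁) := by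
    have hK : 1 ≤ c₁₂ / c₂₂ / (P₂ / P₁ * ((α + β₁) / β₂)) := (one_le_div (by positivity)).2 h1
    calc 1 - r₂ = α / (α + β₂) * 1 := by rw [hgap₂, mul_one]
      _ ≤ α / (α + β₂) * (c₁₂ / c₂₂ / (P₂ / P₁ * ((α + β₁) / β₂))) := by gcongr
      _ = r₂ * t₂ * (1 - r₁) := by rw [hgap₁]; simp only [r₂, t₂]; field_simp
  have h₂ : r₁ * t₁ * (1 - r₂) < 1 - r₁ := by
    have hL : c₂₁ / c₁₁ / (P₁ / P₂ * ((α + β₂) / β₁)) < 1 := (div_lt_one (by positivity)).2 h2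
    calc r₁ * t₁ * (1 - r₂) = α / (α + β₁) * (c₂₁ / c₁₁ / (P₁ / P₂ * ((α + β₂) / β₁))) := by
          rw [hgap₂]; simp only [r₁, t₁]; field_simp
      _ < α / (α + β₁) * 1 := by gcongr
      _ = 1 - r₁ := by rw [hgap₁, mul_one]
  simp only [BR₁, BR₂, hBR]
  exact cappedResponse_fixed_iff (hr β₁ hβ₁) (hr β₂ hβ₂) h₁ h₂ hx₁.2

theorem stmt_6 (α β₁ β₂ P₁ P₂ c₁₁ c₂₂ c₁₂ c₂₁ : ℝ)
    (hα : 0 < α) (hβ₁ : 0 < β₁) (hβ₂ : 0 < β₂) (hP₁ : 0 < P₁) (hP₂ : 0 < P₂)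
    (hc₁₁ : 0 < c₁₁) (hc₂₂ : 0 < c₂₂) (hc₁₂ : 0 < c₁₂) (hc₂₁ : 0 < c₂₁)
    (h1 : P₂ / P₁ * ((α + β₁) / β₂) ≤ c₁₂ / c₂₂)
    (h2 : c₂₁ / c₁₁ < P₁ / P₂ * ((α + β₂) / β₁)) :
    let BR₁ := fun x₂ : ℝ =>
      min (β₁ / (α + β₁) * (1 + P₂ * c₂₁ / (P₁ * c₁₁) * (1 - x₂))) 1
    let BR₂ := fun x₁ : ℝ =>
      min (β₂ / (α + β₂) * (1 + P₁ * c₁₂ / (P₂ * c₂₂) * (1 - x₁))) 1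
    ∀ x₁ x₂ : ℝ, x₁ ∈ Icc (0:ℝ) 1 → x₂ ∈ Icc (0:ℝ) 1 →
      ((x₁ = BR₁ x₂ ∧ x₂ = BR₂ x₁) ↔ (x₁ = β₁ / (α + β₁) ∧ x₂ = 1)) :=
  stmt_6_general α β₁ β₂ P₁ P₂ c₁₁ c₂₂ c₁₂ c₂₁ hα hβ₁ hβ₂ hP₁ hP₂ h1 h2
end

section
/- In a two-player COG, if (c₁₂/c₂₂) > (P₂/P₁)·(α+β₁)/β₂ and (c₂₁/c₁₁) > (P₁/P₂)·(α+β₂)/β₁, then the simultaneous best-response fixed-point equations have exactly three solutions in [0,1]²: the interior solution of the two linear equations, the point (β₁/(α+β₁), 1), and the point (1, β₂/(α+β₂)). -/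
/-!
Write `a = β₁/(α+β₁)`, `b = β₂/(α+β₂)` and `r`, `s` for the two cost ratios, so the unsaturated
best responses are the decreasing affine maps `F₁ y = a (1 + r (1 - y))`, `F₂ x = b (1 + s (1 - x))`,
with `F₁ 1 = a` and `F₂ 1 = b`. The hypotheses say exactly that `F₁ b > 1` and `F₂ a > 1`: each
player saturates when the other plays its corner strategy, which produces the two corner fixed
points. Off the corners both responses are unsaturated, so a fixed point solves `x = F₁ (F₂ x)`,
an affine equation of slope `a r b s > 1`; it has exactly one solution, and the intermediate value
theorem places it in `(a, 1)`, since `F₁ (F₂ a) < a` and `F₁ (F₂ 1) > 1`.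
-/

open Set

def affineBR (a r y : ℝ) : ℝ := a * (1 + r * (1 - y))

section AffineBR

variable {a b r s x y : ℝ}

@[simp] lemma affineBR_one (a r : ℝ) : affineBR a r 1 = a := by simp [affineBR]

lemma continuous_affineBR : Continuous (affineBR a r) := by
  unfold affineBR; fun_prop

lemma strictAnti_affineBR (h : 0 < a * r) : StrictAnti (affineBR a r) := fun y y' hy => by
  unfold affineBR; nlinarith

lemma one_lt_affineBR_div_iff {α β β' r : ℝ} (hα : 0 < α) (hβ : 0 < β) (hβ' : 0 < β') :
    1 < affineBR (β / (α + β)) r (β' / (α + β')) ↔ (α + β') / β < r := by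
  have hαβ : 0 < α + β := by linarith
  have hαβ' : 0 < α + β' := by linarith
  have hsub : affineBR (β / (α + β)) r (β' / (α + β')) - 1
      = α * (β * r - (α + β')) / ((α + β) * (α + β')) := by
    unfold affineBR; field_simp; ring
  rw [← sub_pos, hsub, div_pos_iff_of_pos_right (by positivity), mul_pos_iff_of_pos_left hα,
    sub_pos, div_lt_iff₀' hβ]

lemma mul_pos_of_one_lt_affineBR (ha : a < 1) (hb : b < 1) (h₁ : 1 < affineBR a r b) :
    0 < a * r := by
  unfold affineBR at h₁; nlinarith

variable (ha : a < 1) (hb : b < 1) (h₁ : 1 < affineBR a r b) (h₂ : 1 < affineBR b s a)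
include ha hb h₁ h₂

lemma one_lt_mul_of_one_lt_affineBR : 1 < a * r * (b * s) := by
  unfold affineBR at h₁ h₂; nlinarith [mul_pos (sub_pos.2 ha) (sub_pos.2 hb)]

lemma eq_of_affineBR_fixedPoint {x' y' : ℝ}
    (hx : x = affineBR a r y) (hy : y = affineBR b s x)
    (hx' : x' = affineBR a r y') (hy' : y' = affineBR b s x') : (x, y) = (x', y') := by
  have hslope := one_lt_mul_of_one_lt_affineBR ha hb h₁ h₂
  unfold affineBR at hx hy hx' hy'
  have hprod : (a * r * (b * s) - 1) * (x - x') = 0 := by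
    linear_combination hx' - hx + a * r * (hy - hy')
  obtain rfl : x = x' := sub_eq_zero.1 ((mul_eq_zero.1 hprod).resolve_left (by linarith))
  rw [hy, hy']

lemma exists_affineBR_fixedPoint_mem_Ioo :
    ∃ p : ℝ × ℝ, (p.1 = affineBR a r p.2 ∧ p.2 = affineBR b s p.1) ∧
      p.1 ∈ Ioo a 1 ∧ p.2 ∈ Ioo b 1 := by
  have hF₁ := strictAnti_affineBR (mul_pos_of_one_lt_affineBR ha hb h₁)
  have hF₂ := strictAnti_affineBR (mul_pos_of_one_lt_affineBR hb ha h₂)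
  set g : ℝ → ℝ := fun x => affineBR a r (affineBR b s x) - x
  have hga : g a < 0 := by
    have hlt : affineBR a r (affineBR b s a) < a := by simpa using hF₁ h₂
    simp only [g]; linarith
  have hg1 : 0 < g 1 := by simp only [g, affineBR_one]; linarith
  obtain ⟨x, hx, hgx⟩ : ∃ x ∈ Ioo a 1, g x = 0 :=
    intermediate_value_Ioo ha.le
      ((continuous_affineBR.comp continuous_affineBR).sub continuous_id).continuousOn ⟨hga, hg1⟩
  refine ⟨(x, affineBR b s x), ⟨by simp only [g] at hgx; linarith, rfl⟩, hx, ?_, ?_⟩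
  · simpa using hF₂ hx.2
  · by_contra! hy
    have hle : affineBR a r (affineBR b s x) ≤ a := by simpa using hF₁.antitone hy
    simp only [g] at hgx
    linarith [hx.1]

lemma min_affineBR_fixedPoint_iff {p : ℝ × ℝ}
    (hp : p.1 = affineBR a r p.2 ∧ p.2 = affineBR b s p.1) (hp₁ : p.1 < 1) (hp₂ : p.2 < 1)
    (q : ℝ × ℝ) :
    (q.1 = min (affineBR a r q.2) 1 ∧ q.2 = min (affineBR b s q.1) 1) ↔
      (q = p ∨ q = (a, 1) ∨ q = (1, b)) := by
  obtain ⟨x, y⟩ := q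
  constructor
  · rintro ⟨hx, hy : y = _⟩
    change x = _ at hx
    rcases le_or_gt 1 (affineBR a r y) with hF₁ | hF₁
    · rw [min_eq_right hF₁] at hx
      subst hx
      rw [affineBR_one, min_eq_left hb.le] at hy
      exact .inr (.inr (by rw [hy]))
    rcases le_or_gt 1 (affineBR b s x) with hF₂ | hF₂
    · rw [min_eq_right hF₂] at hy
      subst hy
      rw [affineBR_one, min_eq_left ha.le] at hx
      exact .inr (.inl (by rw [hx]))
    rw [min_eq_left hF₁.le] at hx
    rw [min_eq_left hF₂.le] at hy
    exact .inl (eq_of_affineBR_fixedPoint ha hb h₁ h₂ hx hy hp.1 hp.2)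
  · rintro (h | h | h) <;> simp only [Prod.ext_iff] at h <;> obtain ⟨rfl, rfl⟩ := h
    · rw [← hp.1, ← hp.2, min_eq_left hp₁.le, min_eq_left hp₂.le]
      exact ⟨rfl, rfl⟩
    · simp [ha.le, h₂.le]
    · simp [hb.le, h₁.le]

end AffineBR

lemma lt_mul_div_mul_of_div_mul_lt {P₁ P₂ c d K : ℝ} (hP₁ : 0 < P₁) (hP₂ : 0 < P₂)
    (h : P₁ / P₂ * K < c / d) : K < P₂ * c / (P₁ * d) := by
  rwa [show P₂ * c / (P₁ * d) = c / d / (P₁ / P₂) by rw [div_div_eq_mul_div]; ring,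
    lt_div_iff₀' (by positivity)]

theorem stmt_7_general (α β₁ β₂ P₁ P₂ c₁₁ c₂₂ c₁₂ c₂₁ : ℝ)
    (hα : 0 < α) (hβ₁ : 0 < β₁) (hβ₂ : 0 < β₂) (hP₁ : 0 < P₁) (hP₂ : 0 < P₂)
    (h1 : P₂ / P₁ * ((α + β₁) / β₂) < c₁₂ / c₂₂)
    (h2 : P₁ / P₂ * ((α + β₂) / β₁) < c₂₁ / c₁₁) :
    let f₁ := fun x₂ : ℝ => β₁ / (α + β₁) * (1 + P₂ * c₂₁ / (P₁ * c₁₁) * (1 - x₂))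
    let f₂ := fun x₁ : ℝ => β₂ / (α + β₂) * (1 + P₁ * c₁₂ / (P₂ * c₂₂) * (1 - x₁))
    let BR₁ := fun x₂ : ℝ => min (f₁ x₂) 1
    let BR₂ := fun x₁ : ℝ => min (f₂ x₁) 1
    ∃ p : ℝ × ℝ, (p.1 = f₁ p.2 ∧ p.2 = f₂ p.1) ∧
      p.1 ∈ Ioo (β₁ / (α + β₁)) 1 ∧ p.2 ∈ Ioo (β₂ / (α + β₂)) 1 ∧
      p ≠ (β₁ / (α + β₁), 1) ∧ p ≠ (1, β₂ / (α + β₂)) ∧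
      ((β₁ / (α + β₁), (1:ℝ)) : ℝ × ℝ) ≠ (1, β₂ / (α + β₂)) ∧
      ∀ q : ℝ × ℝ, q.1 ∈ Icc (0:ℝ) 1 → q.2 ∈ Icc (0:ℝ) 1 →
        ((q.1 = BR₁ q.2 ∧ q.2 = BR₂ q.1) ↔
          (q = p ∨ q = (β₁ / (α + β₁), 1) ∨ q = (1, β₂ / (α + β₂)))) := by
  intro f₁ f₂ BR₁ BR₂
  have ha : β₁ / (α + β₁) < 1 := (div_lt_one (by positivity)).2 (by linarith)
  have hb : β₂ / (α + β₂) < 1 := (div_lt_one (by positivity)).2 (by linarith)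
  have h₁ := (one_lt_affineBR_div_iff hα hβ₁ hβ₂).2 (lt_mul_div_mul_of_div_mul_lt hP₁ hP₂ h2)
  have h₂ := (one_lt_affineBR_div_iff hα hβ₂ hβ₁).2 (lt_mul_div_mul_of_div_mul_lt hP₂ hP₁ h1)
  obtain ⟨p, hp, hp₁, hp₂⟩ := exists_affineBR_fixedPoint_mem_Ioo ha hb h₁ h₂
  refine ⟨p, hp, hp₁, hp₂, fun h => hp₁.1.ne' (congrArg Prod.fst h),
    fun h => hp₁.2.ne (congrArg Prod.fst h), fun h => ha.ne (congrArg Prod.fst h),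
    fun q _ _ => min_affineBR_fixedPoint_iff ha hb h₁ h₂ hp hp₁.2 hp₂.2 q⟩

theorem stmt_7 (α β₁ β₂ P₁ P₂ c₁₁ c₂₂ c₁₂ c₂₁ : ℝ)
    (hα : 0 < α) (hβ₁ : 0 < β₁) (hβ₂ : 0 < β₂) (hP₁ : 0 < P₁) (hP₂ : 0 < P₂)
    (hc₁₁ : 0 < c₁₁) (hc₂₂ : 0 < c₂₂) (hc₁₂ : 0 < c₁₂) (hc₂₁ : 0 < c₂₁)
    (h1 : P₂ / P₁ * ((α + β₁) / β₂) < c₁₂ / c₂₂)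
    (h2 : P₁ / P₂ * ((α + β₂) / β₁) < c₂₁ / c₁₁) :
    let f₁ := fun x₂ : ℝ => β₁ / (α + β₁) * (1 + P₂ * c₂₁ / (P₁ * c₁₁) * (1 - x₂))
    let f₂ := fun x₁ : ℝ => β₂ / (α + β₂) * (1 + P₁ * c₁₂ / (P₂ * c₂₂) * (1 - x₁))
    let BR₁ := fun x₂ : ℝ => min (f₁ x₂) 1
    let BR₂ := fun x₁ : ℝ => min (f₂ x₁) 1
    ∃ p : ℝ × ℝ, (p.1 = f₁ p.2 ∧ p.2 = f₂ p.1) ∧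
      p.1 ∈ Ioo (β₁ / (α + β₁)) 1 ∧ p.2 ∈ Ioo (β₂ / (α + β₂)) 1 ∧
      p ≠ (β₁ / (α + β₁), 1) ∧ p ≠ (1, β₂ / (α + β₂)) ∧
      ((β₁ / (α + β₁), (1:ℝ)) : ℝ × ℝ) ≠ (1, β₂ / (α + β₂)) ∧
      ∀ q : ℝ × ℝ, q.1 ∈ Icc (0:ℝ) 1 → q.2 ∈ Icc (0:ℝ) 1 →
        ((q.1 = BR₁ q.2 ∧ q.2 = BR₂ q.1) ↔
          (q = p ∨ q = (β₁ / (α + β₁), 1) ∨ q = (1, β₂ / (α + β₂)))) :=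
  stmt_7_general α β₁ β₂ P₁ P₂ c₁₁ c₂₂ c₁₂ c₂₁ hα hβ₁ hβ₂ hP₁ hP₂ h1 h2
end

section
/- Under the weak-interference conditions Σ_{j≠k} P_j c_{j,k} < (α/β_k)·P_k c_{k,k} for all k, the K-player COG has a unique Nash equilibrium, given by x* = (I − A)⁻¹ b, where A(k,j) = −(β_k/(α+β_k))(P_j c_{j,k})/(P_k c_{k,k}) for j ≠ k, A(k,k) = 0, and b(k) = (β_k/(α+β_k))·(Σ_{j} P_j c_{j,k})/(P_k c_{k,k}). In particular I − A is invertible and x* ∈ (0,1)^K. -/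
open Real Set

/-- The achievable-rate utility of player `k` in the capacity offload game. -/
noncomputable def util (K : ℕ) (α n₀ : ℝ) (β P : Fin K → ℝ)
    (c : Fin K → Fin K → ℝ) (k : Fin K) (x : Fin K → ℝ) : ℝ :=
  α * Real.logb 2 (1 + (1 - x k) * P k * c k k /
      (n₀ * α + ∑ j ∈ Finset.univ.erase k, (1 - x j) * P j * c j k)) +
  β k * Real.logb 2 (1 + x k * P k * c k k / (n₀ * β k))

/-!
With the other shares fixed, player `k`'s utility is, up to constants, `α log a + β log b`
where `a + b` does not depend on its own share `y`. Since `log t ≤ t - 1` (Gibbs' inequality)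
it is uniquely maximised where `a : b = α : β`, so the best response is the affine map
`z ↦ (A z + b)_k`, and the Nash equilibria are exactly the fixed points of `z ↦ A z + b` in the
box. Weak interference makes `A` entrywise nonpositive with `b < 1` and `b + A 𝟙 > 0`. Then every
row of `|A|` sums to less than `1`, so `1 - A` is invertible by Gershgorin, and measured from the
centre of the box the fixed point equation is a contraction in the sup norm, which keeps the
unique fixed point inside `(0, 1)^K`.
-/

open Finset Matrix

lemma mul_log_add_mul_log_lt {p q a b : ℝ} (hp : 0 < p) (hq : 0 < q) (ha : 0 < a) (hb : 0 < b)
    (hne : a ≠ p / (p + q) * (a + b)) :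
    p * log a + q * log b < p * log (p / (p + q) * (a + b)) + q * log (q / (p + q) * (a + b)) := by
  set a' := p / (p + q) * (a + b)
  set b' := q / (p + q) * (a + b)
  have ha' : 0 < a' := by positivity
  have hb' : 0 < b' := by positivity
  have hlt_a : log a - log a' < a / a' - 1 := by
    rw [← log_div ha.ne' ha'.ne']
    exact log_lt_sub_one_of_pos (by positivity) (by rwa [Ne, div_eq_one_iff_eq ha'.ne'])
  have hle_b : log b - log b' ≤ b / b' - 1 := by
    rw [← log_div hb.ne' hb'.ne']
    exact log_le_sub_one_of_pos (by positivity)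
  -- `p / a' = q / b'`, so the linear upper bounds sum to zero
  have hsum : p * (a / a' - 1) + q * (b / b' - 1) = 0 := by
    simp only [a', b']; field_simp; ring
  nlinarith [mul_lt_mul_of_pos_left hlt_a hp, mul_le_mul_of_nonneg_left hle_b hq.le]

lemma mul_logb_add_mul_logb_lt_of_ne {p q n G I y : ℝ} (hp : 0 < p) (hq : 0 < q) (hn : 0 < n)
    (hG : 0 < G) (hI : 0 ≤ I) (hy : y ∈ Icc (0 : ℝ) 1)
    (hne : y ≠ q / (p + q) * ((G + I) / G)) :
    p * logb 2 (1 + (1 - y) * G / (n * p + I)) + q * logb 2 (1 + y * G / (n * q)) <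
      p * logb 2 (1 + (1 - q / (p + q) * ((G + I) / G)) * G / (n * p + I)) +
        q * logb 2 (1 + q / (p + q) * ((G + I) / G) * G / (n * q)) := by
  obtain ⟨hy0, hy1⟩ := hy
  set y' := q / (p + q) * ((G + I) / G)
  have hD : 0 < n * p + I := by positivity
  have hE : 0 < n * q := by positivity
  have hlogb : ∀ u v : ℝ, 0 < v → 0 < v + u →
      logb 2 (1 + u / v) = (log (v + u) - log v) / log 2 := fun u v hv hvu => by
    rw [one_add_div hv.ne', logb, log_div hvu.ne' hv.ne']
  -- the total `a + b` below does not depend on `y`, and `y'` splits it in the ratio `p : q`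
  have ha' : n * p + I + (1 - y') * G =
      p / (p + q) * ((n * p + I + (1 - y) * G) + (n * q + y * G)) := by
    simp only [y']; field_simp; ring
  have hb' : n * q + y' * G =
      q / (p + q) * ((n * p + I + (1 - y) * G) + (n * q + y * G)) := by
    simp only [y']; field_simp; ring
  have key := mul_log_add_mul_log_lt hp hq (a := n * p + I + (1 - y) * G) (b := n * q + y * G)
    (by nlinarith) (by positivity)
    (by rw [← ha']; exact fun h => hne (mul_right_cancel₀ hG.ne' (by linarith)))
  rw [← ha', ← hb'] at key
  rw [hlogb _ _ hD (by nlinarith), hlogb _ _ hE (by positivity),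
    hlogb _ _ hD (by rw [ha']; positivity), hlogb _ _ hE (by rw [hb']; positivity)]
  refine sub_pos.1 ((div_pos (sub_pos.2 key) (log_pos one_lt_two)).trans_eq ?_)
  ring

-- The noise level `n₀` cancels out of the maximiser.
noncomputable def bestResponse (K : ℕ) (α : ℝ) (β P : Fin K → ℝ) (c : Fin K → Fin K → ℝ)
    (k : Fin K) (z : Fin K → ℝ) : ℝ :=
  β k / (α + β k) * ((P k * c k k + ∑ j ∈ univ.erase k, (1 - z j) * P j * c j k) / (P k * c k k))

lemma util_update_eq {K : ℕ} (α n₀ : ℝ) (β P : Fin K → ℝ) (c : Fin K → Fin K → ℝ) (k : Fin K)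
    (z : Fin K → ℝ) (y : ℝ) :
    util K α n₀ β P c k (Function.update z k y) =
      α * logb 2 (1 + (1 - y) * (P k * c k k) /
          (n₀ * α + ∑ j ∈ univ.erase k, (1 - z j) * P j * c j k)) +
        β k * logb 2 (1 + y * (P k * c k k) / (n₀ * β k)) := by
  have hsum : ∑ j ∈ univ.erase k, (1 - Function.update z k y j) * P j * c j k =
      ∑ j ∈ univ.erase k, (1 - z j) * P j * c j k :=
    sum_congr rfl fun j hj => by rw [Function.update_of_ne (ne_of_mem_erase hj)]
  rw [util, Function.update_self, hsum, mul_assoc (1 - y), mul_assoc y]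

lemma util_update_lt_util_update_bestResponse {K : ℕ} {α n₀ : ℝ} {β P : Fin K → ℝ}
    {c : Fin K → Fin K → ℝ} {k : Fin K} (hα : 0 < α) (hn : 0 < n₀) (hβ : 0 < β k)
    (hP : ∀ j, 0 < P j) (hc : ∀ j, 0 < c j k) {z : Fin K → ℝ} (hz : ∀ j, z j ≤ 1) {y : ℝ}
    (hy : y ∈ Icc (0 : ℝ) 1) (hne : y ≠ bestResponse K α β P c k z) :
    util K α n₀ β P c k (Function.update z k y) <
      util K α n₀ β P c k (Function.update z k (bestResponse K α β P c k z)) := by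
  have hI : 0 ≤ ∑ j ∈ univ.erase k, (1 - z j) * P j * c j k :=
    sum_nonneg fun j _ => by have := hz j; have := hP j; have := hc j; positivity
  rw [util_update_eq, util_update_eq]
  exact mul_logb_add_mul_logb_lt_of_ne hα hβ hn (mul_pos (hP k) (hc k)) hI hy hne

section AffineFixedPoint

variable {ι : Type*} [Fintype ι] {A : Matrix ι ι ℝ} {b : ι → ℝ}

lemma isUnit_one_sub_of_sum_abs_lt_one [DecidableEq ι] (h : ∀ i, ∑ j, |A i j| < 1) :
    IsUnit (1 - A) := by
  rw [isUnit_iff_isUnit_det, isUnit_iff_ne_zero]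
  refine det_ne_zero_of_sum_row_lt_diag fun k => ?_
  calc ∑ j ∈ univ.erase k, ‖(1 - A) k j‖ = ∑ j ∈ univ.erase k, |A k j| :=
        sum_congr rfl fun j hj => by simp [one_apply_ne (ne_of_mem_erase hj).symm]
    _ = ∑ j, |A k j| - |A k k| := by rw [← add_sum_erase _ _ (mem_univ k)]; ring
    _ < |1| - |A k k| := by rw [abs_one]; linarith [h k]
    _ ≤ ‖(1 - A) k k‖ := by simpa using abs_sub_abs_le_abs_sub 1 (A k k)

lemma mulVec_add_eq_self_iff [DecidableEq ι] (h : IsUnit (1 - A)) {x : ι → ℝ} :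
    A *ᵥ x + b = x ↔ x = (1 - A)⁻¹ *ᵥ b := by
  have hdet := (isUnit_iff_isUnit_det _).1 h
  have hlin : A *ᵥ x + b = x ↔ (1 - A) *ᵥ x = b := by
    rw [sub_mulVec, one_mulVec, sub_eq_iff_eq_add', eq_comm]
  rw [hlin]
  constructor
  · rintro rfl
    rw [mulVec_mulVec, nonsing_inv_mul _ hdet, one_mulVec]
  · rintro rfl
    rw [mulVec_mulVec, mul_nonsing_inv _ hdet, one_mulVec]

lemma abs_mulVec_le (A : Matrix ι ι ℝ) (y : ι → ℝ) (i : ι) :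
    |(A *ᵥ y) i| ≤ (∑ j, |A i j|) * ‖y‖ := by
  rw [sum_mul]
  refine (abs_sum_le_sum_abs _ _).trans (sum_le_sum fun j _ => ?_)
  rw [abs_mul]
  exact mul_le_mul_of_nonneg_left (norm_le_pi_norm y j) (abs_nonneg _)

lemma sum_abs_eq_neg_sum_of_nonpos {i : ι} (hA : ∀ j, A i j ≤ 0) :
    ∑ j, |A i j| = -∑ j, A i j := by
  rw [← sum_neg_distrib]
  exact sum_congr rfl fun j _ => abs_of_nonpos (hA j)

lemma sum_abs_lt_one_of_nonpos {i : ι} (hA : ∀ j, A i j ≤ 0) (hb : b i < 1)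
    (hAb : 0 < b i + ∑ j, A i j) : ∑ j, |A i j| < 1 := by
  linarith [sum_abs_eq_neg_sum_of_nonpos hA]

lemma mulVec_add_mem_Ioo {i : ι} (hA : ∀ j, A i j ≤ 0) (hb : b i < 1)
    (hAb : 0 < b i + ∑ j, A i j) {x : ι → ℝ} (hx : ∀ j, x j ∈ Icc (0 : ℝ) 1) :
    (A *ᵥ x + b) i ∈ Ioo (0 : ℝ) 1 := by
  have hle : (A *ᵥ x) i ≤ 0 :=
    sum_nonpos fun j _ => mul_nonpos_of_nonpos_of_nonneg (hA j) (hx j).1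
  have hge : ∑ j, A i j ≤ (A *ᵥ x) i :=
    sum_le_sum fun j _ => by nlinarith [hA j, (hx j).2]
  rw [Pi.add_apply]
  constructor <;> linarith

lemma mem_Ioo_of_mulVec_add_eq_self (hA : ∀ i j, A i j ≤ 0) (hb : ∀ i, b i < 1)
    (hAb : ∀ i, 0 < b i + ∑ j, A i j) {x : ι → ℝ} (hx : A *ᵥ x + b = x) (i : ι) :
    x i ∈ Ioo (0 : ℝ) 1 := by
  set y : ι → ℝ := fun j => x j - 1 / 2
  have hrow : ∀ i, |y i| < 1 / 2 + (∑ j, |A i j|) * (‖y‖ - 1 / 2) := by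
    intro i
    have hs := sum_abs_eq_neg_sum_of_nonpos (hA i)
    have hyi : y i = (b i + (∑ j, A i j) / 2 - 1 / 2) + (A *ᵥ y) i := by
      have hxi := congrFun hx i
      simp only [y, Pi.add_apply, mulVec, dotProduct, mul_sub, sum_sub_distrib,
        ← sum_mul] at hxi ⊢
      linarith
    have hc : |b i + (∑ j, A i j) / 2 - 1 / 2| < (1 - ∑ j, |A i j|) / 2 := by
      rw [abs_lt]; constructor <;> linarith [hb i, hAb i]
    calc |y i| ≤ |b i + (∑ j, A i j) / 2 - 1 / 2| + |(A *ᵥ y) i| := hyi ▸ abs_add_le _ _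
      _ < (1 - ∑ j, |A i j|) / 2 + (∑ j, |A i j|) * ‖y‖ :=
          add_lt_add_of_lt_of_le hc (abs_mulVec_le A y i)
      _ = 1 / 2 + (∑ j, |A i j|) * (‖y‖ - 1 / 2) := by ring
  have hy : ‖y‖ < 1 / 2 := by
    by_contra! hy
    refine (lt_irrefl ‖y‖) ((pi_norm_lt_iff (by linarith)).2 fun i => ?_)
    have hs := sum_abs_lt_one_of_nonpos (hA i) (hb i) (hAb i)
    have := hrow i
    rw [Real.norm_eq_abs]
    nlinarith
  have hyi := abs_lt.1 ((Real.norm_eq_abs _ ▸ norm_le_pi_norm y i).trans_lt hy)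
  simp only [y] at hyi
  constructor <;> linarith [hyi.1, hyi.2]

end AffineFixedPoint

section Game

variable {K : ℕ} {α n₀ : ℝ} {β P : Fin K → ℝ} {c : Fin K → Fin K → ℝ}

lemma forall_util_update_le_iff {k : Fin K} (hα : 0 < α) (hn : 0 < n₀) (hβ : 0 < β k)
    (hP : ∀ j, 0 < P j) (hc : ∀ j, 0 < c j k) {z : Fin K → ℝ} (hz : ∀ j, z j ∈ Icc (0 : ℝ) 1)
    (hbr : bestResponse K α β P c k z ∈ Icc (0 : ℝ) 1) :
    (∀ y ∈ Icc (0 : ℝ) 1,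
        util K α n₀ β P c k (Function.update z k y) ≤ util K α n₀ β P c k z) ↔
      z k = bestResponse K α β P c k z := by
  have hlt := fun y (hy : y ∈ Icc (0 : ℝ) 1) (hne : y ≠ bestResponse K α β P c k z) =>
    util_update_lt_util_update_bestResponse (n₀ := n₀) hα hn hβ hP hc (fun j => (hz j).2) hy hne
  constructor
  · intro h
    by_contra hne
    have hbetter := hlt (z k) (hz k) hne
    rw [Function.update_eq_self] at hbetter
    exact (h _ hbr).not_gt hbetter
  · intro h y hy
    rcases eq_or_ne y (z k) with rfl | hne
    · rw [Function.update_eq_self]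
    · rw [h] at hne
      have hworse := hlt y hy hne
      rw [← h, Function.update_eq_self] at hworse
      exact hworse.le

variable (α β P c)

noncomputable def bestResponseMatrix : Matrix (Fin K) (Fin K) ℝ :=
  Matrix.of fun k j =>
    if j = k then 0 else -(β k / (α + β k)) * (P j * c j k / (P k * c k k))

noncomputable def bestResponseOffset : Fin K → ℝ :=
  fun k => β k / (α + β k) * ((∑ j, P j * c j k) / (P k * c k k))

lemma bestResponse_eq_mulVec_add_apply (z : Fin K → ℝ) (k : Fin K) :
    bestResponse K α β P c k z =
      (bestResponseMatrix α β P c *ᵥ z + bestResponseOffset α β P c) k := by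
  have hAz : ∑ j ∈ univ.erase k, bestResponseMatrix α β P c k j * z j =
      -(β k / (α + β k) / (P k * c k k)) * ∑ j ∈ univ.erase k, z j * P j * c j k := by
    rw [mul_sum]
    exact sum_congr rfl fun j hj => by
      rw [bestResponseMatrix, of_apply, if_neg (ne_of_mem_erase hj)]; ring
  have hI : ∑ j ∈ univ.erase k, (1 - z j) * P j * c j k =
      ∑ j ∈ univ.erase k, P j * c j k - ∑ j ∈ univ.erase k, z j * P j * c j k := by
    rw [← sum_sub_distrib]
    exact sum_congr rfl fun _ _ => by ring
  rw [bestResponse, Pi.add_apply, mulVec, dotProduct, ← add_sum_erase _ _ (mem_univ k), hAz,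
    bestResponseMatrix, of_apply, if_pos rfl, bestResponseOffset, ← add_sum_erase _ _ (mem_univ k),
    hI]
  ring

variable {α β P c}

lemma bestResponseMatrix_nonpos (hα : 0 < α) (hβ : ∀ k, 0 < β k) (hP : ∀ k, 0 < P k)
    (hc : ∀ j k, 0 < c j k) (k j : Fin K) : bestResponseMatrix α β P c k j ≤ 0 := by
  have := hβ k; have := hP k; have := hP j; have := hc j k; have := hc k k
  rw [bestResponseMatrix, of_apply]
  split_ifs
  · rfl
  · rw [neg_mul, neg_nonpos]; positivity

lemma bestResponseOffset_lt_one {k : Fin K} (hα : 0 < α) (hβ : 0 < β k) (hG : 0 < P k * c k k)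
    (hw : ∑ j ∈ univ.erase k, P j * c j k < α / β k * (P k * c k k)) :
    bestResponseOffset α β P c k < 1 := by
  have hw' : β k * ∑ j ∈ univ.erase k, P j * c j k < α * (P k * c k k) := by
    rwa [div_mul_eq_mul_div, lt_div_iff₀ hβ, mul_comm] at hw
  have hbr := bestResponse_eq_mulVec_add_apply α β P c 0 k
  rw [mulVec_zero, zero_add] at hbr
  simp only [← hbr, bestResponse, Pi.zero_apply, sub_zero, one_mul]
  rw [div_mul_div_comm, div_lt_one (by positivity)]
  linarith

lemma bestResponseOffset_add_sum_bestResponseMatrix_pos {k : Fin K} (hα : 0 < α) (hβ : 0 < β k)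
    (hG : P k * c k k ≠ 0) :
    0 < bestResponseOffset α β P c k + ∑ j, bestResponseMatrix α β P c k j := by
  have hbr := bestResponse_eq_mulVec_add_apply α β P c 1 k
  simp only [Pi.add_apply, mulVec, dotProduct, Pi.one_apply, mul_one] at hbr
  rw [add_comm, ← hbr]
  simpa [bestResponse, hG] using div_pos hβ (add_pos hα hβ)

def IsNashEquilibrium (K : ℕ) (α n₀ : ℝ) (β P : Fin K → ℝ) (c : Fin K → Fin K → ℝ)
    (z : Fin K → ℝ) : Prop :=
  (∀ k, z k ∈ Icc (0 : ℝ) 1) ∧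
    ∀ k : Fin K, ∀ y ∈ Icc (0 : ℝ) 1,
      util K α n₀ β P c k (Function.update z k y) ≤ util K α n₀ β P c k z

lemma isNashEquilibrium_iff (hα : 0 < α) (hn : 0 < n₀) (hβ : ∀ k, 0 < β k)
    (hP : ∀ k, 0 < P k) (hc : ∀ j k, 0 < c j k)
    (hw : ∀ k, ∑ j ∈ univ.erase k, P j * c j k < α / β k * (P k * c k k)) {z : Fin K → ℝ} :
    IsNashEquilibrium K α n₀ β P c z ↔
      (∀ k, z k ∈ Icc (0 : ℝ) 1) ∧
        bestResponseMatrix α β P c *ᵥ z + bestResponseOffset α β P c = z := by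
  refine and_congr_right fun hz => ?_
  rw [funext_iff]
  refine forall_congr' fun k => ?_
  have hG := mul_pos (hP k) (hc k k)
  have hbr := bestResponse_eq_mulVec_add_apply α β P c z k ▸ Ioo_subset_Icc_self
    (mulVec_add_mem_Ioo (bestResponseMatrix_nonpos hα hβ hP hc k)
      (bestResponseOffset_lt_one hα (hβ k) hG (hw k))
      (bestResponseOffset_add_sum_bestResponseMatrix_pos hα (hβ k) hG.ne') hz)
  rw [forall_util_update_le_iff hα hn (hβ k) hP (fun j => hc j k) hz hbr,
    bestResponse_eq_mulVec_add_apply, eq_comm]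

end Game

theorem stmt_10 (K : ℕ) (α n₀ : ℝ) (β P : Fin K → ℝ) (c : Fin K → Fin K → ℝ)
    (hα : 0 < α) (hn : 0 < n₀) (hβ : ∀ k, 0 < β k) (hP : ∀ k, 0 < P k)
    (hc : ∀ j k, 0 < c j k)
    (hw : ∀ k, (∑ j ∈ Finset.univ.erase k, P j * c j k) < α / β k * (P k * c k k))
    (A : Matrix (Fin K) (Fin K) ℝ)
    (hA : ∀ k j, A k j =
      if j = k then 0 else -(β k / (α + β k)) * (P j * c j k / (P k * c k k)))
    (b : Fin K → ℝ)
    (hb : ∀ k, b k = β k / (α + β k) * ((∑ j, P j * c j k) / (P k * c k k))) :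
    IsUnit (1 - A) ∧
    ∃ x : Fin K → ℝ,
      x = (1 - A)⁻¹.mulVec b ∧ (∀ k, x k ∈ Ioo (0:ℝ) 1) ∧
      ((∀ k, x k ∈ Icc (0:ℝ) 1) ∧
        ∀ k : Fin K, ∀ y ∈ Icc (0:ℝ) 1,
          util K α n₀ β P c k (Function.update x k y) ≤ util K α n₀ β P c k x) ∧
      ∀ z : Fin K → ℝ,
        ((∀ k, z k ∈ Icc (0:ℝ) 1) ∧
          ∀ k : Fin K, ∀ y ∈ Icc (0:ℝ) 1,
            util K α n₀ β P c k (Function.update z k y) ≤ util K α n₀ β P c k z) →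
        z = x := by
  obtain rfl : A = bestResponseMatrix α β P c := Matrix.ext hA
  obtain rfl : b = bestResponseOffset α β P c := funext hb
  have hG : ∀ k, 0 < P k * c k k := fun k => mul_pos (hP k) (hc k k)
  have hA0 := bestResponseMatrix_nonpos hα hβ hP hc
  have hb1 : ∀ k, bestResponseOffset α β P c k < 1 := fun k =>
    bestResponseOffset_lt_one hα (hβ k) (hG k) (hw k)
  have hAb : ∀ k, 0 < bestResponseOffset α β P c k + ∑ j, bestResponseMatrix α β P c k j :=
    fun k => bestResponseOffset_add_sum_bestResponseMatrix_pos hα (hβ k) (hG k).ne'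
  have hunit : IsUnit (1 - bestResponseMatrix α β P c) :=
    isUnit_one_sub_of_sum_abs_lt_one fun k => sum_abs_lt_one_of_nonpos (hA0 k) (hb1 k) (hAb k)
  have hfix := (mulVec_add_eq_self_iff (b := bestResponseOffset α β P c) hunit).2 rfl
  have hx := mem_Ioo_of_mulVec_add_eq_self hA0 hb1 hAb hfix
  have hNash := fun z => isNashEquilibrium_iff (z := z) hα hn hβ hP hc hw
  refine ⟨hunit, _, rfl, hx, (hNash _).2 ⟨fun k => Ioo_subset_Icc_self (hx k), hfix⟩,
    fun z hz => (mulVec_add_eq_self_iff hunit).1 ((hNash z).1 hz).2⟩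
end

section
/- Let A₁, …, A_K be K×K matrices where A_k equals the identity matrix except that its k-th row is replaced by a row vector r_k with r_k(k) = 0 and Σ_j |r_k(j)| < 1. Then every absolute row sum of the product A_K·A_{K−1}⋯A₁ is strictly less than 1; consequently the spectral radius of the product is strictly less than 1. -/
/-!
Left multiplication by `A_k = updateRow 1 k r_k` replaces row `k` of a matrix `P` by `r_k ᵥ* P` and
keeps the other rows. If every absolute row sum of `P` is at most `1`, the new row has absolute sum
at most `∑ j, |r_k j| < 1`; so by induction along the product all rows of `A_K ⋯ A_1` have absolute
sum `< 1`. Hence its `ℓ∞` operator norm, which bounds every eigenvalue, is `< 1`.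
-/

open Matrix

namespace Matrix

variable {ι α : Type*} [Fintype ι]

theorem sum_norm_vecMul_le [SeminormedRing α] (b : ι → α) (M : Matrix ι ι α) :
    ∑ j, ‖(b ᵥ* M) j‖ ≤ ∑ m, ‖b m‖ * ∑ j, ‖M m j‖ :=
  calc ∑ j, ‖(b ᵥ* M) j‖
      ≤ ∑ j, ∑ m, ‖b m‖ * ‖M m j‖ :=
        Finset.sum_le_sum fun j _ => (norm_sum_le _ _).trans
          (Finset.sum_le_sum fun m _ => norm_mul_le _ _)
    _ = ∑ m, ‖b m‖ * ∑ j, ‖M m j‖ := by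
        rw [Finset.sum_comm]
        simp only [Finset.mul_sum]

theorem sum_norm_list_prod_updateRow_one_le_and_lt [DecidableEq ι] [SeminormedRing α]
    [NormOneClass α] (r : ι → ι → α) (hr : ∀ k, ∑ j, ‖r k j‖ < 1) (L : List ι) :
    (∀ i, ∑ j, ‖(L.map fun k => (1 : Matrix ι ι α).updateRow k (r k)).prod i j‖ ≤ 1) ∧
      ∀ i ∈ L, ∑ j, ‖(L.map fun k => (1 : Matrix ι ι α).updateRow k (r k)).prod i j‖ < 1 := by
  induction L with
  | nil =>
    refine ⟨fun i => ?_, by simp⟩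
    simp [one_apply, apply_ite]
  | cons k L ih =>
    set P := (L.map fun k => (1 : Matrix ι ι α).updateRow k (r k)).prod
    obtain ⟨hle, hlt⟩ := ih
    have hk : ∑ j, ‖(r k ᵥ* P) j‖ < 1 :=
      calc ∑ j, ‖(r k ᵥ* P) j‖ ≤ ∑ m, ‖r k m‖ * ∑ j, ‖P m j‖ := sum_norm_vecMul_le _ _
        _ ≤ ∑ m, ‖r k m‖ :=
          Finset.sum_le_sum fun m _ => mul_le_of_le_one_right (norm_nonneg _) (hle m)
        _ < 1 := hr k
    simp only [List.map_cons, List.prod_cons, updateRow_mul, Matrix.one_mul, List.mem_cons]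
    refine ⟨fun i => ?_, fun i hi => ?_⟩ <;> obtain rfl | hik := eq_or_ne i k
    · simpa only [updateRow_self] using hk.le
    · simpa only [updateRow_ne hik] using hle i
    · simpa only [updateRow_self] using hk
    · simpa only [updateRow_ne hik] using hlt i (hi.resolve_left hik)

attribute [local instance] Matrix.linftyOpNormedAddCommGroup in
theorem norm_lt_one_of_mulVec_eq_smul {𝕜 : Type*} [NormedField 𝕜] (M : Matrix ι ι 𝕜)
    (hM : ∀ i, ∑ j, ‖M i j‖ < 1) {μ : 𝕜} {v : ι → 𝕜} (hv : v ≠ 0) (hμ : M *ᵥ v = μ • v) :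
    ‖μ‖ < 1 := by
  have hnorm : ‖M‖ < 1 := by
    rw [linfty_opNorm_def, ← NNReal.coe_one, NNReal.coe_lt_coe, Finset.sup_lt_iff one_pos]
    exact fun i _ => by
      simpa only [← NNReal.coe_lt_coe, NNReal.coe_sum, coe_nnnorm, NNReal.coe_one] using hM i
  have hμv : ‖μ‖ * ‖v‖ ≤ ‖M‖ * ‖v‖ := by
    rw [← norm_smul, ← hμ]
    exact linfty_opNorm_mulVec M v
  exact (le_of_mul_le_mul_right hμv (norm_pos_iff.mpr hv)).trans_lt hnorm

end Matrix

theorem stmt_12_general (K : ℕ) (A : Fin K → Matrix (Fin K) (Fin K) ℝ)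
    (r : Fin K → Fin K → ℝ)
    (hr1 : ∀ k, (∑ j, |r k j|) < 1)
    (hA : ∀ k i j, A k i j = if i = k then r k j else if i = j then 1 else 0) :
    (∀ i, (∑ j, |((List.ofFn A).reverse.prod) i j|) < 1) ∧
    ∀ (μ : ℂ) (v : Fin K → ℂ), v ≠ 0 →
      (((List.ofFn A).reverse.prod).map (algebraMap ℝ ℂ)).mulVec v = μ • v →
        ‖μ‖ < 1 := by
  have hA_eq : A = fun k => (1 : Matrix (Fin K) (Fin K) ℝ).updateRow k (r k) := by
    ext k i j
    rw [hA, updateRow_apply, one_apply]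
  have hrows : ∀ i, ∑ j, |(List.ofFn A).reverse.prod i j| < 1 := by
    intro i
    have hr1' : ∀ k, ∑ j, ‖r k j‖ < 1 := by simpa only [Real.norm_eq_abs] using hr1
    have := (sum_norm_list_prod_updateRow_one_le_and_lt r hr1' (List.finRange K).reverse).2 i
      (by simp)
    simpa only [List.map_reverse, ← List.ofFn_eq_map, ← hA_eq, Real.norm_eq_abs] using this
  refine ⟨hrows, fun μ v hv hμ => norm_lt_one_of_mulVec_eq_smul _ (fun i => ?_) hv hμ⟩
  simpa only [map_apply, norm_algebraMap', Real.norm_eq_abs] using hrows i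

theorem stmt_12 (K : ℕ) (A : Fin K → Matrix (Fin K) (Fin K) ℝ)
    (r : Fin K → Fin K → ℝ)
    (hr0 : ∀ k, r k k = 0) (hr1 : ∀ k, (∑ j, |r k j|) < 1)
    (hA : ∀ k i j, A k i j = if i = k then r k j else if i = j then 1 else 0) :
    (∀ i, (∑ j, |((List.ofFn A).reverse.prod) i j|) < 1) ∧
    ∀ (μ : ℂ) (v : Fin K → ℂ), v ≠ 0 →
      (((List.ofFn A).reverse.prod).map (algebraMap ℝ ℂ)).mulVec v = μ • v →
        ‖μ‖ < 1 :=
  stmt_12_general K A r hr1 hA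
end

section
/- With A_k as in the alternating-move update (identity except k-th row replaced by the k-th row of A, which has zero diagonal entry and absolute row sum < 1), the cyclic iteration x((i+1)K) = (A_K⋯A₁)·x(iK) + b̃ converges for every initial condition to its unique fixed point, and this fixed point equals (I − A)⁻¹ b, the unique Nash equilibrium of the weak-interference COG. -/
/-!
Under weak interference every absolute row sum of `A` is below `1`, so the `ℓ∞` operator norm
`θ` of `A` is below `1`: the best-response map `v ↦ A v + b` is a `θ`-contraction for the sup
metric, `1 - A` is invertible, and `(1 - A)⁻¹ b` is its unique fixed point. A single
best-response move is non-expansive towards the fixed point, and in a sweep of `K` moves each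
coordinate is updated exactly once, from a state no farther away than the start of the sweep;
hence every sweep contracts the distance to the fixed point by `θ`.
-/

open Finset Filter Topology

section GaussSeidel

variable {E : Type*} {K : ℕ}

def IsGaussSeidelIter (f : (Fin K → E) → Fin K → E) (x : ℕ → Fin K → E) : Prop :=
  ∀ t : ℕ, ∀ k : Fin K, (k : ℕ) = t % K → x (t + 1) = Function.update (x t) k (f (x t) k)

variable {f : (Fin K → E) → Fin K → E} {x : ℕ → Fin K → E}

namespace IsGaussSeidelIter

theorem apply_eq_of_forall_mod_ne (hx : IsGaussSeidelIter f x) (k : Fin K) {s t : ℕ}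
    (hst : s ≤ t) (hmod : ∀ r, s ≤ r → r < t → r % K ≠ k) : x t k = x s k := by
  induction t, hst using Nat.le_induction with
  | base => rfl
  | succ t hst ih =>
    have hK : t % K < K := Nat.mod_lt t k.pos
    rw [hx t ⟨t % K, hK⟩ rfl,
      Function.update_of_ne fun h => hmod t hst t.lt_succ_self (by rw [h])]
    exact ih fun r hsr hrt => hmod r hsr (hrt.trans t.lt_succ_self)

variable [PseudoMetricSpace E] {xs : Fin K → E} {θ : ℝ}

theorem dist_succ_le (hx : IsGaussSeidelIter f x) (hθ : θ ≤ 1)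
    (hf : ∀ v, dist (f v) xs ≤ θ * dist v xs) (t : ℕ) :
    dist (x (t + 1)) xs ≤ dist (x t) xs := by
  refine (dist_pi_le_iff dist_nonneg).2 fun j => ?_
  have hK : t % K < K := Nat.mod_lt t j.pos
  rw [hx t ⟨t % K, hK⟩ rfl]
  by_cases hj : j = ⟨t % K, hK⟩
  · subst hj
    rw [Function.update_self]
    calc dist (f (x t) _) (xs _) ≤ dist (f (x t)) xs := dist_le_pi_dist _ _ _
      _ ≤ θ * dist (x t) xs := hf _
      _ ≤ dist (x t) xs := mul_le_of_le_one_left dist_nonneg hθ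
  · rw [Function.update_of_ne hj]
    exact dist_le_pi_dist _ _ _

theorem dist_add_le (hx : IsGaussSeidelIter f x) (hθ : θ ≤ 1)
    (hf : ∀ v, dist (f v) xs ≤ θ * dist v xs) (t d : ℕ) :
    dist (x (t + d)) xs ≤ dist (x t) xs := by
  induction d with
  | zero => rfl
  | succ d ih => exact (hx.dist_succ_le hθ hf (t + d)).trans ih

theorem dist_sweep_le (hx : IsGaussSeidelIter f x) (hθ₀ : 0 ≤ θ) (hθ : θ ≤ 1)
    (hf : ∀ v, dist (f v) xs ≤ θ * dist v xs) (i : ℕ) :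
    dist (x ((i + 1) * K)) xs ≤ θ * dist (x (i * K)) xs := by
  refine (dist_pi_le_iff (by positivity)).2 fun k => ?_
  have hmod : (i * K + k) % K = k := by
    rw [Nat.add_comm, Nat.add_mul_mod_self_right, Nat.mod_eq_of_lt k.isLt]
  have hlast : x ((i + 1) * K) k = f (x (i * K + k)) k := by
    rw [hx.apply_eq_of_forall_mod_ne k (s := i * K + k + 1) (by rw [add_mul]; omega),
      hx _ k hmod.symm, Function.update_self]
    intro r hsr hrt hr
    have hr' : r % K = r - i * K := by
      conv_lhs => rw [show r = r - i * K + i * K by omega]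
      rw [Nat.add_mul_mod_self_right, Nat.mod_eq_of_lt (by rw [add_mul] at hrt; omega)]
    omega
  calc dist (x ((i + 1) * K) k) (xs k) ≤ dist (f (x (i * K + k))) xs := by
        rw [hlast]; exact dist_le_pi_dist _ _ _
    _ ≤ θ * dist (x (i * K + k)) xs := hf _
    _ ≤ θ * dist (x (i * K)) xs := by gcongr; exact hx.dist_add_le hθ hf _ _

theorem tendsto_sweep (hx : IsGaussSeidelIter f x) (hθ₀ : 0 ≤ θ) (hθ : θ < 1)
    (hf : ∀ v, dist (f v) xs ≤ θ * dist v xs) :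
    Tendsto (fun i => x (i * K)) atTop (𝓝 xs) := by
  have hgeom : ∀ i, dist (x (i * K)) xs ≤ θ ^ i * dist (x 0) xs := by
    intro i
    induction i with
    | zero => simp
    | succ i ih =>
      calc dist (x ((i + 1) * K)) xs ≤ θ * dist (x (i * K)) xs := hx.dist_sweep_le hθ₀ hθ.le hf i
        _ ≤ θ * (θ ^ i * dist (x 0) xs) := by gcongr
        _ = θ ^ (i + 1) * dist (x 0) xs := by ring
  refine tendsto_iff_dist_tendsto_zero.2 (squeeze_zero (fun _ => dist_nonneg) hgeom ?_)
  simpa using (tendsto_pow_atTop_nhds_zero_of_lt_one hθ₀ hθ).mul_const (dist (x 0) xs)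

end IsGaussSeidelIter

end GaussSeidel

namespace Matrix

variable {n : Type*} [Fintype n]

section FixedPoint

variable [DecidableEq n] {R : Type*} [CommRing R] {A : Matrix n n R} {b : n → R}

theorem one_sub_mulVec_eq_iff {z : n → R} : (1 - A) *ᵥ z = b ↔ z = A *ᵥ z + b := by
  rw [sub_mulVec, one_mulVec, sub_eq_iff_eq_add']

theorem inv_one_sub_mulVec_eq (h : IsUnit (1 - A).det) :
    (1 - A)⁻¹ *ᵥ b = A *ᵥ ((1 - A)⁻¹ *ᵥ b) + b := by
  rw [← one_sub_mulVec_eq_iff, mulVec_mulVec, mul_nonsing_inv _ h, one_mulVec]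

theorem eq_inv_one_sub_mulVec (h : IsUnit (1 - A).det) {z : n → R} (hz : z = A *ᵥ z + b) :
    z = (1 - A)⁻¹ *ᵥ b := by
  rw [← one_sub_mulVec_eq_iff] at hz
  rw [← hz, mulVec_mulVec, nonsing_inv_mul _ h, one_mulVec]

end FixedPoint

open scoped Matrix.Norms.Operator

theorem linfty_opNorm_lt_one {m : Type*} [Fintype m] {A : Matrix m n ℝ}
    (hA : ∀ i, ∑ j, |A i j| < 1) : ‖A‖ < 1 := by
  rw [linfty_opNorm_def, ← NNReal.coe_one, NNReal.coe_lt_coe, Finset.sup_lt_iff zero_lt_one]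
  intro i _
  rw [← NNReal.coe_lt_coe, NNReal.coe_sum]
  simpa using hA i

theorem isUnit_det_one_sub [DecidableEq n] {A : Matrix n n ℝ} (hA : ∀ i, ∑ j, |A i j| < 1) :
    IsUnit (1 - A).det :=
  (isUnit_iff_isUnit_det _).1 (isUnit_one_sub_of_norm_lt_one (linfty_opNorm_lt_one hA))

theorem dist_mulVec_add_le {m α : Type*} [Fintype m] [NonUnitalSeminormedRing α]
    (A : Matrix m n α) (b : m → α) (v w : n → α) :
    dist (A *ᵥ v + b) (A *ᵥ w + b) ≤ ‖A‖ * dist v w := by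
  rw [dist_eq_norm, dist_eq_norm, add_sub_add_right_eq_sub, ← mulVec_sub]
  exact linfty_opNorm_mulVec _ _

theorem tendsto_gaussSeidel_mulVec_add {K : ℕ} {A : Matrix (Fin K) (Fin K) ℝ}
    (hA : ∀ i, ∑ j, |A i j| < 1) (b : Fin K → ℝ) {x : ℕ → Fin K → ℝ}
    (hx : IsGaussSeidelIter (fun v => A *ᵥ v + b) x) :
    Tendsto (fun i => x (i * K)) atTop (𝓝 ((1 - A)⁻¹ *ᵥ b)) := by
  refine hx.tendsto_sweep (norm_nonneg A) (linfty_opNorm_lt_one hA) fun v => ?_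
  conv_lhs => rw [inv_one_sub_mulVec_eq (isUnit_det_one_sub hA)]
  exact dist_mulVec_add_le A b v _

end Matrix

theorem sum_abs_lt_one_of_weak_interference {ι : Type*} [Fintype ι] [DecidableEq ι] {k : ι}
    {α β D : ℝ} {w a : ι → ℝ} (hα : 0 < α) (hβ : 0 < β) (hD : 0 < D) (hw : ∀ j, 0 ≤ w j)
    (hweak : ∑ j ∈ univ.erase k, w j < α / β * D)
    (ha : ∀ j, a j = if j = k then 0 else -(β / (α + β)) * (w j / D)) :
    ∑ j, |a j| < 1 := by
  have hsum : ∑ j, |a j| = β / (α + β) * ((∑ j ∈ univ.erase k, w j) / D) := by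
    rw [← add_sum_erase _ _ (mem_univ k), ha k, if_pos rfl, abs_zero, zero_add, sum_div,
      mul_sum]
    refine sum_congr rfl fun j hj => ?_
    rw [ha j, if_neg (ne_of_mem_erase hj), abs_mul, abs_neg, abs_of_pos (by positivity),
      abs_of_nonneg (div_nonneg (hw j) hD.le)]
  rw [div_mul_eq_mul_div, lt_div_iff₀ hβ] at hweak
  rw [hsum, div_mul_div_comm, div_lt_one (by positivity)]
  nlinarith [mul_pos hβ hD]

theorem stmt_13_general (K : ℕ) (α : ℝ) (β P : Fin K → ℝ)
    (c : Fin K → Fin K → ℝ)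
    (hα : 0 < α) (hβ : ∀ k, 0 < β k) (hP : ∀ k, 0 < P k) (hc : ∀ j k, 0 < c j k)
    (hw : ∀ k, (∑ j ∈ Finset.univ.erase k, P j * c j k) < α / β k * (P k * c k k))
    (A : Matrix (Fin K) (Fin K) ℝ)
    (hA : ∀ k j, A k j =
      if j = k then 0 else -(β k / (α + β k)) * (P j * c j k / (P k * c k k)))
    (b : Fin K → ℝ)
    (x : ℕ → Fin K → ℝ)
    -- alternating-move update: at time t, player (t mod K) best-responds
    (hx : ∀ t : ℕ, ∀ k : Fin K, (k : ℕ) = t % K →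
      x (t + 1) = Function.update (x t) k ((A.mulVec (x t) + b) k)) :
    Filter.Tendsto (fun i => x (i * K)) Filter.atTop
        (nhds ((1 - A)⁻¹.mulVec b)) ∧
    (1 - A)⁻¹.mulVec b = A.mulVec ((1 - A)⁻¹.mulVec b) + b ∧
    ∀ z : Fin K → ℝ, z = A.mulVec z + b → z = (1 - A)⁻¹.mulVec b := by
  have hrow : ∀ k, ∑ j, |A k j| < 1 := fun k =>
    sum_abs_lt_one_of_weak_interference hα (hβ k) (mul_pos (hP k) (hc k k))
      (fun j => (mul_pos (hP j) (hc j k)).le) (hw k) (hA k)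
  have hdet := Matrix.isUnit_det_one_sub hrow
  exact ⟨Matrix.tendsto_gaussSeidel_mulVec_add hrow b hx, Matrix.inv_one_sub_mulVec_eq hdet,
    fun _ => Matrix.eq_inv_one_sub_mulVec hdet⟩

theorem stmt_13 (K : ℕ) (hK : 0 < K) (α : ℝ) (β P : Fin K → ℝ)
    (c : Fin K → Fin K → ℝ)
    (hα : 0 < α) (hβ : ∀ k, 0 < β k) (hP : ∀ k, 0 < P k) (hc : ∀ j k, 0 < c j k)
    (hw : ∀ k, (∑ j ∈ Finset.univ.erase k, P j * c j k) < α / β k * (P k * c k k))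
    (A : Matrix (Fin K) (Fin K) ℝ)
    (hA : ∀ k j, A k j =
      if j = k then 0 else -(β k / (α + β k)) * (P j * c j k / (P k * c k k)))
    (b : Fin K → ℝ)
    (hb : ∀ k, b k = β k / (α + β k) * ((∑ j, P j * c j k) / (P k * c k k)))
    (x : ℕ → Fin K → ℝ)
    -- alternating-move update: at time t, player (t mod K) best-responds
    (hx : ∀ t : ℕ, ∀ k : Fin K, (k : ℕ) = t % K →
      x (t + 1) = Function.update (x t) k ((A.mulVec (x t) + b) k)) :
    Filter.Tendsto (fun i => x (i * K)) Filter.atTop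
        (nhds ((1 - A)⁻¹.mulVec b)) ∧
    (1 - A)⁻¹.mulVec b = A.mulVec ((1 - A)⁻¹.mulVec b) + b ∧
    ∀ z : Fin K → ℝ, z = A.mulVec z + b → z = (1 - A)⁻¹.mulVec b :=
  stmt_13_general K α β P c hα hβ hP hc hw A hA b x hx
end

section
/- For any fixed strategies x_{-k} ∈ [0,1]^{K−1} of the other players, the strategy x_k = BR_k(x_{-k}) = min{(β_k/(α+β_k))[1 + Σ_{j≠k} P_j c_{j,k}(1−x_j)/(P_k c_{k,k})], 1} is the unique maximizer of u_k(·, x_{-k}) over [0,1]. -/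
/-!
As a function of `y = x_k` the utility is `(α log(1 + (1-y)A/B) + β log(1 + yA/D)) / log 2`,
where `A = P_k c_{k,k}`, `B = n₀α + I` and `D = n₀β_k` do not depend on `y`. Its derivative in `y`
is a positive multiple of `s - y`, where `s = β/(α+β) (1 + I/A)` is the critical point; hence it
strictly increases on `[0, min s 1]` and strictly decreases on `[min s 1, 1]`.
-/

open Real Set

theorem lt_of_deriv_pos_of_deriv_neg {f : ℝ → ℝ} {a b m y : ℝ} (hm : m ∈ Icc a b)
    (hf : ContinuousOn f (Icc a b)) (hinc : ∀ t ∈ Ioo a m, 0 < deriv f t)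
    (hdec : ∀ t ∈ Ioo m b, deriv f t < 0) (hy : y ∈ Icc a b) (hne : y ≠ m) :
    f y < f m := by
  rcases hne.lt_or_gt with hlt | hgt
  · have hmono : StrictMonoOn f (Icc a m) :=
      strictMonoOn_of_deriv_pos (convex_Icc a m) (hf.mono (Icc_subset_Icc_right hm.2))
        (by simpa only [interior_Icc] using hinc)
    exact hmono ⟨hy.1, hlt.le⟩ ⟨hm.1, le_rfl⟩ hlt
  · have hanti : StrictAntiOn f (Icc m b) :=
      strictAntiOn_of_deriv_neg (convex_Icc m b) (hf.mono (Icc_subset_Icc_left hm.1))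
        (by simpa only [interior_Icc] using hdec)
    exact hanti ⟨le_rfl, hm.2⟩ ⟨hgt.le, hy.2⟩ hgt

/-- Up to the factor `log 2`, the utility of a player offloading the fraction `y`: `A` is its own
received power, `B` the noise-plus-interference on the shared channel, `D` the noise on the
private one. -/
noncomputable def twoRate (α β A B D y : ℝ) : ℝ :=
  α * log (1 + (1 - y) * A / B) + β * log (1 + y * A / D)

section twoRate

variable {α β A B D s y : ℝ}

theorem hasDerivAt_twoRate (hA : 0 ≤ A) (hB : 0 < B) (hD : 0 < D) (hy : y ∈ Icc 0 1)
    (hs : (α + β) * A * s = β * (B + A) - α * D) :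
    HasDerivAt (twoRate α β A B D)
      ((α + β) * A ^ 2 * (s - y) / ((B + (1 - y) * A) * (D + y * A))) y := by
  have hB' : 0 < B + (1 - y) * A := by nlinarith [hy.2]
  have hD' : 0 < D + y * A := by nlinarith [hy.1]
  have h₁ : 0 < 1 + (1 - y) * A / B := by
    have : 0 ≤ (1 - y) * A / B := div_nonneg (mul_nonneg (by linarith [hy.2]) hA) hB.le
    linarith
  have h₂ : 0 < 1 + y * A / D := by
    have : 0 ≤ y * A / D := div_nonneg (mul_nonneg hy.1 hA) hD.le
    linarith
  have d₁ : HasDerivAt (fun y => 1 + (1 - y) * A / B) (-A / B) y := by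
    simpa using (((hasDerivAt_id y).const_sub 1).mul_const A).div_const B |>.const_add 1
  have d₂ : HasDerivAt (fun y => 1 + y * A / D) (A / D) y := by
    simpa using ((hasDerivAt_id y).mul_const A).div_const D |>.const_add 1
  refine (((d₁.log h₁.ne').const_mul α).add ((d₂.log h₂.ne').const_mul β)).congr_deriv ?_
  have hX : B + A * (1 - y) ≠ 0 := by linarith
  have hY : D + A * y ≠ 0 := by linarith
  field_simp
  linear_combination -A * hs

theorem twoRate_lt_twoRate_min (hαβ : 0 < α + β) (hA : 0 < A) (hB : 0 < B) (hD : 0 < D)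
    (hs : (α + β) * A * s = β * (B + A) - α * D) (hs₀ : 0 ≤ s) (hy : y ∈ Icc 0 1)
    (hne : y ≠ min s 1) :
    twoRate α β A B D y < twoRate α β A B D (min s 1) := by
  have hderiv t (ht : t ∈ Icc (0 : ℝ) 1) := hasDerivAt_twoRate hA.le hB hD ht hs
  have hden t (ht : t ∈ Icc (0 : ℝ) 1) : 0 < (B + (1 - t) * A) * (D + t * A) :=
    mul_pos (by nlinarith [ht.2]) (by nlinarith [ht.1])
  have hcoef : 0 < (α + β) * A ^ 2 := by positivity
  refine lt_of_deriv_pos_of_deriv_neg ⟨le_min hs₀ zero_le_one, min_le_right _ _⟩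
    (fun t ht => (hderiv t ht).continuousAt.continuousWithinAt) (fun t ht => ?_)
    (fun t ht => ?_) hy hne
  · have ht' : t ∈ Icc (0 : ℝ) 1 := ⟨ht.1.le, ht.2.le.trans (min_le_right _ _)⟩
    have hts : t < s := ht.2.trans_le (min_le_left _ _)
    rw [(hderiv t ht').deriv]
    exact div_pos (mul_pos hcoef (sub_pos.2 hts)) (hden t ht')
  · have ht' : t ∈ Icc (0 : ℝ) 1 := ⟨(le_min hs₀ zero_le_one).trans ht.1.le, ht.2.le⟩
    have hst : s < t := (min_lt_iff.1 ht.1).resolve_right (by linarith [ht.2])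
    rw [(hderiv t ht').deriv]
    exact div_neg_of_neg_of_pos (mul_neg_of_pos_of_neg hcoef (sub_neg.2 hst)) (hden t ht')

end twoRate

theorem util_update_eq_twoRate (K : ℕ) (α n₀ : ℝ) (β P : Fin K → ℝ) (c : Fin K → Fin K → ℝ)
    (k : Fin K) (x : Fin K → ℝ) (y : ℝ) :
    util K α n₀ β P c k (Function.update x k y) =
      twoRate α (β k) (P k * c k k)
        (n₀ * α + ∑ j ∈ Finset.univ.erase k, P j * c j k * (1 - x j)) (n₀ * β k) y / log 2 := by
  have hI : ∑ j ∈ Finset.univ.erase k, (1 - Function.update x k y j) * P j * c j k =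
      ∑ j ∈ Finset.univ.erase k, P j * c j k * (1 - x j) :=
    Finset.sum_congr rfl fun j hj => by
      rw [Function.update_of_ne (Finset.ne_of_mem_erase hj)]; ring
  simp only [util, Function.update_self, hI]
  simp only [twoRate, Real.logb, mul_assoc]
  ring

theorem stmt_16 (K : ℕ) (α n₀ : ℝ) (β P : Fin K → ℝ) (c : Fin K → Fin K → ℝ)
    (hα : 0 < α) (hn : 0 < n₀) (hβ : ∀ k, 0 < β k) (hP : ∀ k, 0 < P k)
    (hc : ∀ j k, 0 < c j k) (k : Fin K) (x : Fin K → ℝ)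
    (hx : ∀ j, x j ∈ Icc (0:ℝ) 1) :
    let br := min (β k / (α + β k) *
      (1 + (∑ j ∈ Finset.univ.erase k, P j * c j k * (1 - x j)) / (P k * c k k))) 1
    br ∈ Icc (0:ℝ) 1 ∧
    ∀ y ∈ Icc (0:ℝ) 1, y ≠ br →
      util K α n₀ β P c k (Function.update x k y) <
        util K α n₀ β P c k (Function.update x k br) := by
  intro br
  set I := ∑ j ∈ Finset.univ.erase k, P j * c j k * (1 - x j)
  have hI : 0 ≤ I := Finset.sum_nonneg fun j _ =>
    mul_nonneg (mul_pos (hP j) (hc j k)).le (sub_nonneg.2 (hx j).2)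
  have hA : 0 < P k * c k k := mul_pos (hP k) (hc k k)
  have hαβ : 0 < α + β k := add_pos hα (hβ k)
  have hs₀ : 0 ≤ β k / (α + β k) * (1 + I / (P k * c k k)) := by
    have := div_nonneg hI hA.le
    exact mul_nonneg (div_pos (hβ k) hαβ).le (by linarith)
  refine ⟨⟨le_min hs₀ zero_le_one, min_le_right _ _⟩, fun y hy hne => ?_⟩
  rw [util_update_eq_twoRate, util_update_eq_twoRate]
  refine div_lt_div_of_pos_right (twoRate_lt_twoRate_min hαβ hA (by positivity)
    (mul_pos hn (hβ k)) ?_ hs₀ hy hne) (log_pos one_lt_two)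
  field_simp [(hP k).ne', (hc k k).ne']
  ring
end
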